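/- arXiv:1011.4114 — 8 statements merged into one kernel-verified Lean document; each statement's English description precedes it below -/
import Mathlib

section
/- In an adhesive category, if a pair of arrows (b : B → K, f : K → G) with b a monomorphism has a pushout complement, then that pushout complement is unique up to isomorphism: for any two pushout complements (c : B → G', g : G' → G) and (c' : B → G'', g' : G'' → G), there exists an isomorphism φ : G' → G'' with φ ∘ c = c' and g' ∘ φ = g. -/
open CategoryTheory Limits

/-- Key step: given two pushout complements of `(b, f)` with `b` a mono, the first
projection of the pullback of the two comparison maps `g, g'` is an isomorphism.
This is the van Kampen cube argument of Lack–Sobociński. -/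
lemma pushoutComplement_pullbackFst_isIso
    {A : Type*} [Category A] [Adhesive A]
    {B K G G' G'' : A} (b : B ⟶ K) [Mono b] (f : K ⟶ G)
    (c : B ⟶ G') (g : G' ⟶ G) (c' : B ⟶ G'') (g' : G'' ⟶ G) [Mono g]
    (h1 : IsPushout b c f g) (h2 : IsPushout b c' f g') [HasPullback g g'] :
    IsIso (pullback.fst g g') := by
  set u : pullback g g' ⟶ G' := pullback.fst g g' with hu_def
  set v : pullback g g' ⟶ G'' := pullback.snd g g' with hv_def
  have hcc : c ≫ g = c' ≫ g' := h1.w.symm.trans h2.w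
  set ℓ : B ⟶ pullback g g' := pullback.lift c c' hcc with hℓ_def
  have hu : ℓ ≫ u = c := pullback.lift_fst _ _ _
  have hv : ℓ ≫ v = c' := pullback.lift_snd _ _ _
  have puv : IsPullback u v g g' := IsPullback.of_hasPullback g g'
  have h1pb : IsPullback b c f g := Adhesive.isPullback_of_isPushout_of_mono_left h1
  have idpb : IsPullback (𝟙 B) (𝟙 B) b b := IsKernelPair.id_of_mono b
  -- the big pasted square
  have big : IsPullback (𝟙 B) c (b ≫ f) g := by
    simpa using idpb.paste_vert h1pb
  have sbig : IsPullback (ℓ ≫ u) (𝟙 B) g (c' ≫ g') := by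
    rw [hu, ← h2.w]; exact big.flip
  -- the back face of the cube over c'
  have back2 : IsPullback ℓ (𝟙 B) v c' :=
    IsPullback.of_right sbig (by simpa using hv) puv
  -- apply the van Kampen property of the pushout `h2`
  have vk := Adhesive.van_kampen h2
  have po : IsPushout (𝟙 B) ℓ c u := by
    refine (vk (𝟙 B) ℓ c u (𝟙 B) b v g idpb back2 ⟨h1.w.symm⟩ ⟨pullback.condition⟩
      ⟨by simpa using hu.symm⟩).mpr ⟨h1pb.flip, puv⟩
  -- a pushout along an identity gives an isomorphism
  have hd1 : c ≫ po.desc ℓ (𝟙 _) (by simp) = ℓ := po.inl_desc _ _ _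
  have hd2 : u ≫ po.desc ℓ (𝟙 _) (by simp) = 𝟙 _ := po.inr_desc _ _ _
  refine ⟨po.desc ℓ (𝟙 _) (by simp), hd2, ?_⟩
  apply po.hom_ext
  · rw [← Category.assoc, hd1, hu, Category.comp_id]
  · rw [← Category.assoc, hd2, Category.id_comp, Category.comp_id]

/-- In an adhesive category, pushout complements along monomorphisms are unique up to
isomorphism.  A pushout complement of `(b : B ⟶ K, f : K ⟶ G)` is a pair
`(c : B ⟶ G', g : G' ⟶ G)` making the square with `b, c, f, g` a pushout. -/
theorem pushoutComplement_unique_of_adhesive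
    {A : Type*} [Category A] [Adhesive A]
    {B K G G' G'' : A} (b : B ⟶ K) [Mono b] (f : K ⟶ G)
    (c : B ⟶ G') (g : G' ⟶ G) (c' : B ⟶ G'') (g' : G'' ⟶ G)
    (h1 : IsPushout b c f g) (h2 : IsPushout b c' f g') :
    ∃ φ : G' ≅ G'', c ≫ φ.hom = c' ∧ φ.hom ≫ g' = g := by
  haveI : Mono g := Adhesive.mono_of_isPushout_of_mono_left h1
  haveI : Mono g' := Adhesive.mono_of_isPushout_of_mono_left h2
  haveI : HasPullback g g' := Adhesive.hasPullback_of_mono_left g g'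
  haveI : HasPullback g' g := Adhesive.hasPullback_of_mono_left g' g
  haveI hiu : IsIso (pullback.fst g g') :=
    pushoutComplement_pullbackFst_isIso b f c g c' g' h1 h2
  haveI hiv : IsIso (pullback.snd g g') := by
    haveI : IsIso (pullback.fst g' g) :=
      pushoutComplement_pullbackFst_isIso b f c' g' c g h2 h1
    rw [← pullbackSymmetry_hom_comp_fst g g']
    infer_instance
  refine ⟨(asIso (pullback.fst g g')).symm ≪≫ asIso (pullback.snd g g'), ?_, ?_⟩
  · have hu : pullback.lift c c' (h1.w.symm.trans h2.w) ≫ pullback.fst g g' = c :=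
      pullback.lift_fst _ _ _
    have hv : pullback.lift c c' (h1.w.symm.trans h2.w) ≫ pullback.snd g g' = c' :=
      pullback.lift_snd _ _ _
    simp only [Iso.trans_hom, Iso.symm_hom, asIso_inv, asIso_hom]
    rw [← hu, Category.assoc, IsIso.hom_inv_id_assoc, hv]
  · simp only [Iso.trans_hom, Iso.symm_hom, asIso_inv, asIso_hom, Category.assoc]
    rw [← pullback.condition]
    simp
end

section
/- Let S : C → A be a selective adhesive functor into an adhesive category A. If a pair of arrows (b : B → K, f : K → G) in C with b mono has an S-adhesive pushout complement, then it is unique up to isomorphism in C. -/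
open CategoryTheory Limits

/-- A selective adhesive functor: a faithful functor into an (adhesive) category that
preserves monomorphisms, creates isomorphisms, and reflects pushouts. -/
structure SelectiveAdhesive {C A : Type*} [Category C] [Category A] (S : C ⥤ A) : Prop where
  faithful : ∀ {X Y : C} (f g : X ⟶ Y), S.map f = S.map g → f = g
  preservesMono : ∀ {X Y : C} (f : X ⟶ Y), Mono f → Mono (S.map f)
  createsIso : ∀ {X Y : C} (φ : S.obj X ≅ S.obj Y), ∃ ψ : X ≅ Y, S.map ψ.hom = φ.hom
  reflectsPushout : ∀ {W X Y Z : C} (f : W ⟶ X) (g : W ⟶ Y) (h : X ⟶ Z) (i : Y ⟶ Z),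
    IsPushout (S.map f) (S.map g) (S.map h) (S.map i) → IsPushout f g h i

/-- A square with identity on one side over a monomorphism is a pullback. -/
lemma isPullback_mono_comp {D : Type*} [Category D] {X Y Z : D} (u : X ⟶ Y) (m : Y ⟶ Z)
    [Mono m] : IsPullback u (𝟙 X) m (u ≫ m) := by
  have s : IsPullback (𝟙 X) u u (𝟙 Y) := IsPullback.of_horiz_isIso ⟨by simp⟩
  simpa using (s.paste_vert (IsKernelPair.id_of_mono m)).flip

/-- Uniqueness of pushout complements along a monomorphism in an adhesive category. -/
lemma adhesive_pushoutComplement_unique {D : Type*} [Category D] [Adhesive D]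
    {B K G G' G'' : D} (b : B ⟶ K) [Mono b] (f : K ⟶ G)
    (c : B ⟶ G') (g : G' ⟶ G) (c' : B ⟶ G'') (g' : G'' ⟶ G)
    (h1 : IsPushout b c f g) (h2 : IsPushout b c' f g') :
    ∃ φ : G' ≅ G'', c ≫ φ.hom = c' ∧ φ.hom ≫ g' = g := by
  have mg : Mono g := Adhesive.mono_of_isPushout_of_mono_left h1
  have mg' : Mono g' := Adhesive.mono_of_isPushout_of_mono_left h2
  have P1 : IsPullback b c f g := Adhesive.isPullback_of_isPushout_of_mono_left h1
  have P2 : IsPullback b c' f g' := Adhesive.isPullback_of_isPushout_of_mono_left h2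
  have : HasPullback g g' := Adhesive.hasPullback_of_mono_left g g'
  set P := pullback g g' with hP
  set p1 : P ⟶ G' := pullback.fst g g' with hp1
  set p2 : P ⟶ G'' := pullback.snd g g' with hp2
  have pbP : IsPullback p1 p2 g g' := IsPullback.of_hasPullback g g'
  have w1 : c ≫ g = c' ≫ g' := h1.w.symm.trans h2.w
  set e : B ⟶ P := pbP.lift c c' w1 with he
  have he1 : e ≫ p1 = c := pbP.lift_fst c c' w1
  have he2 : e ≫ p2 = c' := pbP.lift_snd c c' w1
  -- the front-left pullback of the first cube
  have hg1 : IsPullback e (𝟙 B) p1 c := by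
    refine IsPullback.of_right ?_ (by simpa using he1) pbP.flip
    rw [he2]
    have := isPullback_mono_comp c' g'
    rwa [← w1] at this
  -- the front-left pullback of the second cube
  have hg2 : IsPullback e (𝟙 B) p2 c' := by
    refine IsPullback.of_right ?_ (by simpa using he2) pbP
    rw [he1]
    have := isPullback_mono_comp c g
    rwa [w1] at this
  -- van Kampen for the first pushout: the top of the cube is a pushout
  have top1 : IsPushout (𝟙 B) e c' p2 :=
    ((Adhesive.van_kampen h1) (𝟙 B) e c' p2 (𝟙 B) b p1 g'
      (IsKernelPair.id_of_mono b) hg1 ⟨h2.w.symm⟩ ⟨pbP.w.symm⟩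
      ⟨by simp [he2]⟩).mpr ⟨P2.flip, pbP.flip⟩
  -- van Kampen for the second pushout
  have top2 : IsPushout (𝟙 B) e c p1 :=
    ((Adhesive.van_kampen h2) (𝟙 B) e c p1 (𝟙 B) b p2 g
      (IsKernelPair.id_of_mono b) hg2 ⟨h1.w.symm⟩ ⟨pbP.w⟩
      ⟨by simp [he1]⟩).mpr ⟨P1.flip, pbP⟩
  -- the trivial pushout of the same span
  have triv : IsPushout (𝟙 B) e e (𝟙 P) := IsPushout.of_horiz_isIso ⟨by simp⟩
  have hiso2 : IsIso p2 := by
    have := IsPushout.inr_isoIsPushout_hom _ _ triv top1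
    rw [Category.id_comp] at this
    rw [← this]; infer_instance
  have hiso1 : IsIso p1 := by
    have := IsPushout.inr_isoIsPushout_hom _ _ triv top2
    rw [Category.id_comp] at this
    rw [← this]; infer_instance
  refine ⟨(asIso p1).symm ≪≫ asIso p2, ?_, ?_⟩
  · have h : c ≫ inv p1 = e := by rw [← he1]; simp
    simp only [Iso.trans_hom, Iso.symm_hom, asIso_inv, asIso_hom, ← Category.assoc, h, he2]
  · simp only [Iso.trans_hom, Iso.symm_hom, asIso_inv, asIso_hom, Category.assoc, ← pbP.w,
      IsIso.inv_hom_id_assoc]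

/-- For a selective adhesive functor `S : C ⥤ A` into an adhesive category `A`,
`S`-adhesive pushout complements along monomorphisms are unique up to isomorphism in `C`.
An `S`-adhesive pushout complement of `(b, f)` is a pushout complement whose pushout
square is preserved by `S`. -/
theorem sAdhesive_pushoutComplement_unique
    {C A : Type*} [Category C] [Category A] [Adhesive A]
    {S : C ⥤ A} (hS : SelectiveAdhesive S)
    {B K G G' G'' : C} (b : B ⟶ K) [Mono b] (f : K ⟶ G)
    (c : B ⟶ G') (g : G' ⟶ G) (c' : B ⟶ G'') (g' : G'' ⟶ G)
    (h1 : IsPushout b c f g)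
    (h1S : IsPushout (S.map b) (S.map c) (S.map f) (S.map g))
    (h2 : IsPushout b c' f g')
    (h2S : IsPushout (S.map b) (S.map c') (S.map f) (S.map g')) :
    ∃ φ : G' ≅ G'', c ≫ φ.hom = c' ∧ φ.hom ≫ g' = g := by
  have : Mono (S.map b) := hS.preservesMono b inferInstance
  obtain ⟨ψ, hψ1, hψ2⟩ := adhesive_pushoutComplement_unique (S.map b) (S.map f)
    (S.map c) (S.map g) (S.map c') (S.map g') h1S h2S
  obtain ⟨φ, hφ⟩ := hS.createsIso ψ
  refine ⟨φ, ?_, ?_⟩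
  · apply hS.faithful
    rw [S.map_comp, hφ, hψ1]
  · apply hS.faithful
    rw [S.map_comp, hφ, hψ2]
end

section
/- A morphism in the category OGraph of open-graphs is a monomorphism if and only if it is injective on points and edges. -/
open CategoryTheory Limits

/-! Directed graphs as `E ⇉ P` data, the type graph `2_G`, the slice category of
`2_G`-typed graphs, and the category `OGraph` of open-graphs. -/

structure PreGraph : Type 1 where
  E : Type
  P : Type
  s : E → P
  t : E → P

/-- The points of the type graph `2_G`: vertices `V` and edge-points `ε`. -/
inductive TyP : Type
  | V : TyP
  | eps : TyP
  deriving DecidableEq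

/-- The edges of the type graph `2_G`: `V → ε`, `ε → V` and the loop on `ε`. -/
inductive TyE : Type
  | ve : TyE
  | ev : TyE
  | loop : TyE
  deriving DecidableEq

/-- The type graph `2_G`. -/
def twoG : PreGraph where
  E := TyE
  P := TyP
  s e := match e with | .ve => .V | .ev => .eps | .loop => .eps
  t e := match e with | .ve => .eps | .ev => .V | .loop => .eps

structure GraphHom (G H : PreGraph) : Type where
  pe : G.E → H.E
  pp : G.P → H.P
  hs : ∀ e, H.s (pe e) = pp (G.s e)
  ht : ∀ e, H.t (pe e) = pp (G.t e)

def GraphHom.idHom (G : PreGraph) : GraphHom G G :=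
  ⟨fun e => e, fun p => p, fun _ => rfl, fun _ => rfl⟩

def GraphHom.comp {G H K : PreGraph} (f : GraphHom G H) (g : GraphHom H K) :
    GraphHom G K :=
  ⟨fun e => g.pe (f.pe e), fun p => g.pp (f.pp p),
   fun e => by rw [g.hs, f.hs], fun e => by rw [g.ht, f.ht]⟩

/-- An object of the slice category `Graph/2_G`: a graph together with a typing
morphism into `2_G`. -/
structure TypedGraph : Type 1 where
  G : PreGraph
  τ : GraphHom G twoG

/-- A morphism of `2_G`-typed graphs: a graph morphism commuting with the typing. -/
@[ext]
structure TypedHom (X Y : TypedGraph) : Type where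
  h : GraphHom X.G Y.G
  comm_pp : ∀ p, Y.τ.pp (h.pp p) = X.τ.pp p
  comm_pe : ∀ e, Y.τ.pe (h.pe e) = X.τ.pe e

def TypedHom.idHom (X : TypedGraph) : TypedHom X X :=
  ⟨GraphHom.idHom X.G, fun _ => rfl, fun _ => rfl⟩

def TypedHom.comp {X Y Z : TypedGraph} (f : TypedHom X Y) (g : TypedHom Y Z) :
    TypedHom X Z :=
  ⟨f.h.comp g.h,
   fun p => by show Z.τ.pp (g.h.pp (f.h.pp p)) = _; rw [g.comm_pp, f.comm_pp],
   fun e => by show Z.τ.pe (g.h.pe (f.h.pe e)) = _; rw [g.comm_pe, f.comm_pe]⟩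

instance : Category TypedGraph where
  Hom := TypedHom
  id := TypedHom.idHom
  comp := TypedHom.comp
  id_comp _ := rfl
  comp_id _ := rfl
  assoc _ _ _ := rfl

/-- An open-graph: a `2_G`-typed graph in which every edge-point has at most one
in-edge and at most one out-edge. -/
structure OGraph : Type 1 where
  X : TypedGraph
  open_in : ∀ p, X.τ.pp p = TyP.eps →
    ∀ e₁ e₂, X.G.t e₁ = p → X.G.t e₂ = p → e₁ = e₂
  open_out : ∀ p, X.τ.pp p = TyP.eps →
    ∀ e₁ e₂, X.G.s e₁ = p → X.G.s e₂ = p → e₁ = e₂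

/-- A typed-graph morphism is full on vertices when every edge adjacent to the image
`f(v)` of a vertex `v` is the image of an edge adjacent to `v`. -/
def FullOnVertices {X Y : TypedGraph} (f : TypedHom X Y) : Prop :=
  ∀ v, X.τ.pp v = TyP.V → ∀ e, (Y.G.s e = f.h.pp v ∨ Y.G.t e = f.h.pp v) →
    ∃ e', f.h.pe e' = e ∧ (X.G.s e' = v ∨ X.G.t e' = v)

/-- A morphism of open-graphs: a typed-graph morphism that is full on vertices. -/
@[ext]
structure OHom (G H : OGraph) : Type where
  f : TypedHom G.X H.X
  full : FullOnVertices f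

theorem fullOnVertices_id (G : OGraph) : FullOnVertices (TypedHom.idHom G.X) :=
  fun _ _ e he => ⟨e, rfl, he⟩

theorem fullOnVertices_comp {G H K : OGraph} (f : TypedHom G.X H.X)
    (g : TypedHom H.X K.X) (hf : FullOnVertices f) (hg : FullOnVertices g) :
    FullOnVertices (f.comp g) := by
  intro v hv e he
  have hfv : H.X.τ.pp (f.h.pp v) = TyP.V := by rw [f.comm_pp]; exact hv
  obtain ⟨e', he', hadj'⟩ := hg (f.h.pp v) hfv e he
  obtain ⟨e'', he'', hadj''⟩ := hf v hv e' hadj'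
  exact ⟨e'', by show g.h.pe (f.h.pe e'') = e; rw [he'', he'], hadj''⟩

def OHom.idHom (G : OGraph) : OHom G G := ⟨TypedHom.idHom G.X, fullOnVertices_id G⟩

def OHom.comp {G H K : OGraph} (φ : OHom G H) (ψ : OHom H K) : OHom G K :=
  ⟨φ.f.comp ψ.f, fullOnVertices_comp φ.f ψ.f φ.full ψ.full⟩

instance : Category OGraph where
  Hom := OHom
  id := OHom.idHom
  comp := OHom.comp
  id_comp _ := rfl
  comp_id _ := rfl
  assoc _ _ _ := rfl

/-- The point map of an open-graph morphism. -/
def OHom.pp {G H : OGraph} (φ : OHom G H) : G.X.G.P → H.X.G.P := φ.f.h.pp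

/-- The edge map of an open-graph morphism. -/
def OHom.pe {G H : OGraph} (φ : OHom G H) : G.X.G.E → H.X.G.E := φ.f.h.pe

/-- The embedding functor `S : OGraph ⥤ Graph/2_G`. -/
def S : OGraph ⥤ TypedGraph where
  obj G := G.X
  map f := f.f
  map_id _ := rfl
  map_comp _ _ := rfl

/-- An edge-point of an open-graph. -/
def IsEdgePoint (G : OGraph) (p : G.X.G.P) : Prop := G.X.τ.pp p = TyP.eps

/-- An input: an edge-point with no in-edges. -/
def IsInput (G : OGraph) (p : G.X.G.P) : Prop :=
  IsEdgePoint G p ∧ ∀ e, G.X.G.t e ≠ p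

/-- An output: an edge-point with no out-edges. -/
def IsOutput (G : OGraph) (p : G.X.G.P) : Prop :=
  IsEdgePoint G p ∧ ∀ e, G.X.G.s e ≠ p

/-- The boundary graph of `G`: the point graph `In(G) + Out(G)`. -/
def boundaryGraph (G : OGraph) : OGraph where
  X := { G := { E := Empty
                P := {p // IsInput G p} ⊕ {p // IsOutput G p}
                s := fun e => e.elim
                t := fun e => e.elim }
         τ := { pe := fun e => e.elim
                pp := fun _ => TyP.eps
                hs := fun e => e.elim
                ht := fun e => e.elim } }
  open_in := fun _ _ e => e.elim
  open_out := fun _ _ e => e.elim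

/-- The boundary map `b : In(G) + Out(G) ⟶ G`. -/
def boundaryMap (G : OGraph) : boundaryGraph G ⟶ G :=
  OHom.mk
    (TypedHom.mk
      (GraphHom.mk (fun e => e.elim)
        (fun p => Sum.elim (fun q => q.val) (fun q => q.val) p)
        (fun e => e.elim) (fun e => e.elim))
      (by rintro (⟨p, hp⟩ | ⟨p, hp⟩) <;> exact hp.1)
      (fun e => e.elim))
    (by rintro (⟨p, hp⟩ | ⟨p, hp⟩) hv <;> exact absurd hv (by simp [boundaryGraph]))

/-- An isolated point: both an input and an output. -/
def IsIsolated (G : OGraph) (p : G.X.G.P) : Prop := IsInput G p ∧ IsOutput G p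

/-- A point graph: an open-graph consisting only of (isolated) edge-points. -/
def IsPointGraph (G : OGraph) : Prop :=
  (∀ p, IsEdgePoint G p) ∧ (G.X.G.E → False)

/-- A boundary-coherent span of open-graphs. -/
def BoundaryCoherent {G H₁ H₂ : OGraph} (f : G ⟶ H₁) (g : G ⟶ H₂) : Prop :=
  Mono f ∧ Mono g ∧
  (∀ p, IsInput G p → ¬(IsInput H₁ (OHom.pp f p) ∧ IsInput H₂ (OHom.pp g p))) ∧
  (∀ p, IsOutput G p → ¬(IsOutput H₁ (OHom.pp f p) ∧ IsOutput H₂ (OHom.pp g p)))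

/-- A single point with no edges, typed by `ty`. -/
def singlePt (ty : TyP) : OGraph where
  X := { G := { E := Empty, P := Unit, s := Empty.elim, t := Empty.elim }
         τ := { pe := Empty.elim, pp := fun _ => ty,
                hs := fun e => e.elim, ht := fun e => e.elim } }
  open_in := fun _ _ e => e.elim
  open_out := fun _ _ e => e.elim

/-- Mapping the single point into an open-graph. -/
def ptHom (G : OGraph) (ty : TyP) (p : G.X.G.P) (hty : G.X.τ.pp p = ty)
    (hiso : ty = TyP.V → ∀ e, G.X.G.s e ≠ p ∧ G.X.G.t e ≠ p) :
    singlePt ty ⟶ G where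
  f := { h := { pe := Empty.elim, pp := fun _ => p,
                hs := fun e => e.elim, ht := fun e => e.elim }
         comm_pp := fun _ => hty
         comm_pe := fun e => e.elim }
  full := by
    intro v hv e he
    exfalso
    rcases he with he | he
    · exact (hiso hv e).1 he
    · exact (hiso hv e).2 he

theorem OHom.ext' {G H : OGraph} {u v : G ⟶ H}
    (hpe : ∀ e, OHom.pe u e = OHom.pe v e)
    (hpp : ∀ p, OHom.pp u p = OHom.pp v p) : u = v := by
  obtain ⟨⟨⟨upe, upp, _, _⟩, _, _⟩, _⟩ := u
  obtain ⟨⟨⟨vpe, vpp, _, _⟩, _, _⟩, _⟩ := v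
  have h1 : upe = vpe := funext hpe
  have h2 : upp = vpp := funext hpp
  subst h1; subst h2
  rfl

/-- A morphism in `OGraph` is a monomorphism iff it is injective on points and edges. -/
theorem ograph_mono_iff_injective {G H : OGraph} (f : G ⟶ H) :
    Mono f ↔ (Function.Injective (OHom.pp f) ∧ Function.Injective (OHom.pe f)) := by
  constructor
  · intro hm
    have hty : ∀ p, H.X.τ.pp (f.f.h.pp p) = G.X.τ.pp p := f.f.comm_pp
    -- injectivity on edge-points
    have hepsinj : ∀ p₁ p₂, G.X.τ.pp p₁ = TyP.eps →
        f.f.h.pp p₁ = f.f.h.pp p₂ → p₁ = p₂ := by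
      intro p₁ p₂ h1 hf
      have h2 : G.X.τ.pp p₂ = TyP.eps := by rw [← hty p₂, ← hf, hty p₁, h1]
      have hc : ptHom G TyP.eps p₁ h1 (fun h => nomatch h) ≫ f =
          ptHom G TyP.eps p₂ h2 (fun h => nomatch h) ≫ f :=
        OHom.ext' (fun e => e.elim) (fun _ => hf)
      have huv := (cancel_mono f).mp hc
      exact congrArg (fun w => OHom.pp w ()) huv
    -- injectivity on edges
    have hedge : Function.Injective (OHom.pe f) := by
      intro e₁ e₂ hfe
      have hfe' : f.f.h.pe e₁ = f.f.h.pe e₂ := hfe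
      cases hcase : G.X.τ.pe e₁ with
      | ve =>
        have h1 : G.X.τ.pp (G.X.G.t e₁) = TyP.eps := by
          rw [← G.X.τ.ht e₁, hcase]; rfl
        have hpt : f.f.h.pp (G.X.G.t e₁) = f.f.h.pp (G.X.G.t e₂) := by
          rw [← f.f.h.ht e₁, ← f.f.h.ht e₂, hfe']
        exact G.open_in (G.X.G.t e₁) h1 e₁ e₂ rfl (hepsinj _ _ h1 hpt).symm
      | ev =>
        have h1 : G.X.τ.pp (G.X.G.s e₁) = TyP.eps := by
          rw [← G.X.τ.hs e₁, hcase]; rfl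
        have hpt : f.f.h.pp (G.X.G.s e₁) = f.f.h.pp (G.X.G.s e₂) := by
          rw [← f.f.h.hs e₁, ← f.f.h.hs e₂, hfe']
        exact G.open_out (G.X.G.s e₁) h1 e₁ e₂ rfl (hepsinj _ _ h1 hpt).symm
      | loop =>
        have h1 : G.X.τ.pp (G.X.G.s e₁) = TyP.eps := by
          rw [← G.X.τ.hs e₁, hcase]; rfl
        have hpt : f.f.h.pp (G.X.G.s e₁) = f.f.h.pp (G.X.G.s e₂) := by
          rw [← f.f.h.hs e₁, ← f.f.h.hs e₂, hfe']
        exact G.open_out (G.X.G.s e₁) h1 e₁ e₂ rfl (hepsinj _ _ h1 hpt).symm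
    -- injectivity on points
    have hpoint : Function.Injective (OHom.pp f) := by
      intro p₁ p₂ hf
      have hf' : f.f.h.pp p₁ = f.f.h.pp p₂ := hf
      have h2 : G.X.τ.pp p₂ = G.X.τ.pp p₁ := by rw [← hty p₂, ← hf', hty p₁]
      cases hv : G.X.τ.pp p₁ with
      | eps => exact hepsinj _ _ hv hf'
      | V =>
        have hv2 : G.X.τ.pp p₂ = TyP.V := by rw [h2, hv]
        by_cases hiso : ∃ e, G.X.G.s e = p₁ ∨ G.X.G.t e = p₁
        · obtain ⟨e, hadj⟩ := hiso
          have hadjH : H.X.G.s (f.f.h.pe e) = f.f.h.pp p₂ ∨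
              H.X.G.t (f.f.h.pe e) = f.f.h.pp p₂ := by
            rcases hadj with h | h
            · left; rw [f.f.h.hs, h]; exact hf'
            · right; rw [f.f.h.ht, h]; exact hf'
          obtain ⟨e', hfe', hadj'⟩ := f.full p₂ hv2 (f.f.h.pe e) hadjH
          have hee : e' = e := hedge hfe'
          subst hee
          rcases hadj with h1 | h1 <;> rcases hadj' with h2 | h2
          · rw [← h1, ← h2]
          · exfalso
            have hs1 : G.X.τ.pp (G.X.G.s e') = TyP.V := by rw [h1, hv]
            have ht1 : G.X.τ.pp (G.X.G.t e') = TyP.V := by rw [h2, hv2]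
            rw [← G.X.τ.hs] at hs1
            rw [← G.X.τ.ht] at ht1
            cases hτ : G.X.τ.pe e' <;> rw [hτ] at hs1 ht1 <;> simp [twoG] at hs1 ht1
          · exfalso
            have hs1 : G.X.τ.pp (G.X.G.s e') = TyP.V := by rw [h2, hv2]
            have ht1 : G.X.τ.pp (G.X.G.t e') = TyP.V := by rw [h1, hv]
            rw [← G.X.τ.hs] at hs1
            rw [← G.X.τ.ht] at ht1
            cases hτ : G.X.τ.pe e' <;> rw [hτ] at hs1 ht1 <;> simp [twoG] at hs1 ht1
          · rw [← h1, ← h2]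
        · push_neg at hiso
          have hiso1 : ∀ e, G.X.G.s e ≠ p₁ ∧ G.X.G.t e ≠ p₁ := hiso
          have key : ∀ e, (H.X.G.s (f.f.h.pe e) = f.f.h.pp p₁ ∨
              H.X.G.t (f.f.h.pe e) = f.f.h.pp p₁) → False := by
            intro e hadjH
            obtain ⟨e', _, hadj'⟩ := f.full p₁ hv (f.f.h.pe e) hadjH
            rcases hadj' with h | h
            · exact (hiso1 e').1 h
            · exact (hiso1 e').2 h
          have hiso2 : ∀ e, G.X.G.s e ≠ p₂ ∧ G.X.G.t e ≠ p₂ := by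
            intro e
            constructor
            · intro h
              exact key e (Or.inl (by rw [f.f.h.hs, h]; exact hf'.symm))
            · intro h
              exact key e (Or.inr (by rw [f.f.h.ht, h]; exact hf'.symm))
          have hc : ptHom G TyP.V p₁ hv (fun _ => hiso1) ≫ f =
              ptHom G TyP.V p₂ hv2 (fun _ => hiso2) ≫ f :=
            OHom.ext' (fun e => e.elim) (fun _ => hf')
          have huv := (cancel_mono f).mp hc
          exact congrArg (fun w => OHom.pp w ()) huv
    exact ⟨hpoint, hedge⟩
  · rintro ⟨hp, he⟩
    constructor
    intro K u v h
    exact OHom.ext'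
      (fun e => he (congrArg (fun w => OHom.pe w e) h))
      (fun p => hp (congrArg (fun w => OHom.pp w p) h))
end

section
/- A morphism in the category OGraph of open-graphs is a strong epimorphism if and only if it is surjective on points and edges. -/
open CategoryTheory Limits

/-! Monomorphisms of open-graphs are injective on points and edges. Edge-points and
isolated vertices are separated by morphisms out of a one-point graph; an edge is determined
by an endpoint that is an edge-point, since edge-points have at most one in- and one
out-edge; and a vertex with an incident edge is determined, by fullness, by the preimage of
that edge. Hence, for a morphism surjective on points and edges, choosing sections of it gives
the diagonal filler of any square against a mono. Conversely a strong epimorphism factors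
through the inclusion of its image, a mono, which is then an isomorphism. -/

open Function

lemma TypedGraph.src_eps_or_tgt_eps (X : TypedGraph) (e : X.G.E) :
    X.τ.pp (X.G.s e) = .eps ∨ X.τ.pp (X.G.t e) = .eps := by
  rw [← X.τ.hs, ← X.τ.ht]
  cases X.τ.pe e <;> simp [twoG]

lemma TypedGraph.eq_of_incident_vertices (X : TypedGraph) {e : X.G.E} {v w : X.G.P}
    (hv : X.τ.pp v = .V) (hw : X.τ.pp w = .V)
    (hev : X.G.s e = v ∨ X.G.t e = v) (hew : X.G.s e = w ∨ X.G.t e = w) : v = w := by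
  rcases X.src_eps_or_tgt_eps e with h | h <;>
    rcases hev with rfl | rfl <;> rcases hew with rfl | rfl <;> simp_all

namespace OHom

variable {G H : OGraph}

lemma hom_ext {φ ψ : G ⟶ H} (hp : OHom.pp φ = OHom.pp ψ) (he : OHom.pe φ = OHom.pe ψ) :
    φ = ψ := by
  obtain ⟨⟨⟨_, _, _, _⟩, _, _⟩, _⟩ := φ
  obtain ⟨⟨⟨_, _, _, _⟩, _, _⟩, _⟩ := ψ
  cases hp
  cases he
  rfl

lemma pp_src (φ : G ⟶ H) (e : G.X.G.E) :
    H.X.G.s (OHom.pe φ e) = OHom.pp φ (G.X.G.s e) :=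
  φ.f.h.hs e

lemma pp_tgt (φ : G ⟶ H) (e : G.X.G.E) :
    H.X.G.t (OHom.pe φ e) = OHom.pp φ (G.X.G.t e) :=
  φ.f.h.ht e

lemma type_pp (φ : G ⟶ H) (p : G.X.G.P) : H.X.τ.pp (OHom.pp φ p) = G.X.τ.pp p :=
  φ.f.comm_pp p

lemma type_pe (φ : G ⟶ H) (e : G.X.G.E) : H.X.τ.pe (OHom.pe φ e) = G.X.τ.pe e :=
  φ.f.comm_pe e

lemma epi_of_surjective {f : G ⟶ H} (hp : Surjective (OHom.pp f))
    (he : Surjective (OHom.pe f)) : Epi f :=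
  ⟨fun _ _ h => hom_ext (hp.injective_comp_right (congrArg OHom.pp h))
    (he.injective_comp_right (congrArg OHom.pe h))⟩

lemma mono_of_injective {m : G ⟶ H} (hp : Injective (OHom.pp m))
    (he : Injective (OHom.pe m)) : Mono m :=
  ⟨fun _ _ h => hom_ext (hp.comp_left (congrArg OHom.pp h)) (he.comp_left (congrArg OHom.pe h))⟩

lemma surjective_pp_of_isIso (m : G ⟶ H) [IsIso m] : Surjective (OHom.pp m) :=
  fun p => ⟨OHom.pp (inv m) p, congrFun (congrArg OHom.pp (IsIso.inv_hom_id m)) p⟩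

lemma surjective_pe_of_isIso (m : G ⟶ H) [IsIso m] : Surjective (OHom.pe m) :=
  fun e => ⟨OHom.pe (inv m) e, congrFun (congrArg OHom.pe (IsIso.inv_hom_id m)) e⟩

end OHom

def pointGraph (t : TyP) : OGraph where
  X := { G := ⟨Empty, Unit, Empty.elim, Empty.elim⟩
         τ := ⟨Empty.elim, fun _ => t, nofun, nofun⟩ }
  open_in _ _ e := e.elim
  open_out _ _ e := e.elim

def pointHom {X : OGraph} {t : TyP} (p : X.X.G.P) (hp : X.X.τ.pp p = t)
    (hfree : t = .V → ∀ e, X.X.G.s e ≠ p ∧ X.X.G.t e ≠ p) : pointGraph t ⟶ X where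
  f := ⟨⟨Empty.elim, fun _ => p, nofun, nofun⟩, fun _ => hp, nofun⟩
  full _ hv e he := (he.elim (hfree hv e).1 (hfree hv e).2).elim

section Mono

variable {X Y : OGraph} (z : X ⟶ Y) [Mono z]

lemma pp_eq_of_mono_of_unattached {t : TyP} {p q : X.X.G.P} (hp : X.X.τ.pp p = t)
    (hpfree : t = .V → ∀ e, X.X.G.s e ≠ p ∧ X.X.G.t e ≠ p)
    (hqfree : t = .V → ∀ e, X.X.G.s e ≠ q ∧ X.X.G.t e ≠ q)
    (h : OHom.pp z p = OHom.pp z q) : p = q := by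
  have hq : X.X.τ.pp q = t := by rw [← OHom.type_pp z, ← h, OHom.type_pp, hp]
  have := (cancel_mono z).mp (OHom.hom_ext (funext fun _ => h) (funext nofun) :
    pointHom p hp hpfree ≫ z = pointHom q hq hqfree ≫ z)
  exact congrFun (congrArg OHom.pp this) ()

lemma injective_pe_of_mono : Injective (OHom.pe z) := by
  intro e₁ e₂ h
  rcases X.X.src_eps_or_tgt_eps e₁ with hs | ht
  · refine X.open_out _ hs e₁ e₂ rfl (pp_eq_of_mono_of_unattached z hs nofun nofun ?_).symm
    rw [← OHom.pp_src, ← OHom.pp_src, h]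
  · refine X.open_in _ ht e₁ e₂ rfl (pp_eq_of_mono_of_unattached z ht nofun nofun ?_).symm
    rw [← OHom.pp_tgt, ← OHom.pp_tgt, h]

lemma injective_pp_of_mono : Injective (OHom.pp z) := by
  intro p q h
  have hq : X.X.τ.pp q = X.X.τ.pp p := by rw [← OHom.type_pp z, ← h, OHom.type_pp]
  cases hp : X.X.τ.pp p with
  | eps => exact pp_eq_of_mono_of_unattached z hp nofun nofun h
  | V =>
    rw [hp] at hq
    by_cases hinc : ∃ e, Y.X.G.s e = OHom.pp z p ∨ Y.X.G.t e = OHom.pp z p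
    · obtain ⟨e, he⟩ := hinc
      obtain ⟨e₁, rfl, he₁⟩ := z.full p hp e he
      rw [h] at he
      obtain ⟨e₂, he₂, he₂q⟩ := z.full q hq (OHom.pe z e₁) he
      cases injective_pe_of_mono z he₂
      exact X.X.eq_of_incident_vertices hp hq he₁ he₂q
    · push Not at hinc
      have unattached (r : X.X.G.P) (hr : OHom.pp z r = OHom.pp z p) (e : X.X.G.E) :
          X.X.G.s e ≠ r ∧ X.X.G.t e ≠ r :=
        ⟨fun hs => (hinc (OHom.pe z e)).1 (by rw [OHom.pp_src, hs, hr]),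
          fun ht => (hinc (OHom.pe z e)).2 (by rw [OHom.pp_tgt, ht, hr])⟩
      exact pp_eq_of_mono_of_unattached z hp (fun _ => unattached p rfl)
        (fun _ => unattached q h.symm) h

end Mono

section Diagonal

variable {A B X Y : OGraph} {f : A ⟶ B} (hfp : Surjective (OHom.pp f))
  (hfe : Surjective (OHom.pe f)) {u : A ⟶ X} {z : X ⟶ Y} {g : B ⟶ Y}

lemma CategoryTheory.CommSq.pp_eq (sq : CommSq u f z g) (p : A.X.G.P) :
    OHom.pp z (OHom.pp u p) = OHom.pp g (OHom.pp f p) :=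
  congrFun (congrArg OHom.pp sq.w) p

lemma CategoryTheory.CommSq.pe_eq (sq : CommSq u f z g) (e : A.X.G.E) :
    OHom.pe z (OHom.pe u e) = OHom.pe g (OHom.pe f e) :=
  congrFun (congrArg OHom.pe sq.w) e

include hfp in
lemma CategoryTheory.CommSq.pp_surjInv (sq : CommSq u f z g) (p : B.X.G.P) :
    OHom.pp z (OHom.pp u (surjInv hfp p)) = OHom.pp g p := by
  rw [sq.pp_eq, surjInv_eq hfp]

include hfe in
lemma CategoryTheory.CommSq.pe_surjInv (sq : CommSq u f z g) (e : B.X.G.E) :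
    OHom.pe z (OHom.pe u (surjInv hfe e)) = OHom.pe g e := by
  rw [sq.pe_eq, surjInv_eq hfe]

variable [Mono z]

noncomputable def CategoryTheory.CommSq.diagonal (sq : CommSq u f z g) : B ⟶ X where
  f :=
    { h := { pe := OHom.pe u ∘ surjInv hfe
             pp := OHom.pp u ∘ surjInv hfp
             hs e := injective_pp_of_mono z <| by
               simp only [Function.comp_apply]
               rw [← OHom.pp_src, sq.pe_surjInv hfe, OHom.pp_src, sq.pp_surjInv hfp]
             ht e := injective_pp_of_mono z <| by
               simp only [Function.comp_apply]
               rw [← OHom.pp_tgt, sq.pe_surjInv hfe, OHom.pp_tgt, sq.pp_surjInv hfp] }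
      comm_pp p := by
        rw [← OHom.type_pp g, ← sq.pp_surjInv hfp, OHom.type_pp]; rfl
      comm_pe e := by
        rw [← OHom.type_pe g, ← sq.pe_surjInv hfe, OHom.type_pe]; rfl }
  full v hv e he := by
    have hsv : A.X.τ.pp (surjInv hfp v) = .V := by rw [← OHom.type_pp f, surjInv_eq hfp, hv]
    obtain ⟨e', rfl, he'⟩ := u.full _ hsv e he
    refine ⟨OHom.pe f e',
      injective_pe_of_mono z ((sq.pe_surjInv hfe _).trans (sq.pe_eq e').symm), ?_⟩
    rw [OHom.pp_src, OHom.pp_tgt, ← surjInv_eq hfp v]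
    exact he'.imp (congrArg _) (congrArg _)

include hfp hfe in
lemma CategoryTheory.CommSq.hasLift_of_surjective (sq : CommSq u f z g) : sq.HasLift :=
  .mk' { l := sq.diagonal hfp hfe
         fac_left := OHom.hom_ext
           (funext fun p =>
             injective_pp_of_mono z ((sq.pp_surjInv hfp _).trans (sq.pp_eq p).symm))
           (funext fun e =>
             injective_pe_of_mono z ((sq.pe_surjInv hfe _).trans (sq.pe_eq e).symm))
         fac_right := OHom.hom_ext (funext (sq.pp_surjInv hfp)) (funext (sq.pe_surjInv hfe)) }

end Diagonal

lemma strongEpi_of_surjective {A B : OGraph} {f : A ⟶ B} (hfp : Surjective (OHom.pp f))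
    (hfe : Surjective (OHom.pe f)) : StrongEpi f :=
  ⟨OHom.epi_of_surjective hfp hfe, fun _ _ _ _ => ⟨fun sq => sq.hasLift_of_surjective hfp hfe⟩⟩

namespace OHom

variable {G H : OGraph} (f : G ⟶ H)

def imageGraph : OGraph where
  X :=
    { G := { E := Set.range (OHom.pe f)
             P := Set.range (OHom.pp f)
             s e := ⟨H.X.G.s e, e.2.elim fun e' he' => ⟨G.X.G.s e', by rw [← pp_src, he']⟩⟩
             t e := ⟨H.X.G.t e, e.2.elim fun e' he' => ⟨G.X.G.t e', by rw [← pp_tgt, he']⟩⟩ }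
      τ := { pe e := H.X.τ.pe e
             pp p := H.X.τ.pp p
             hs e := H.X.τ.hs e
             ht e := H.X.τ.ht e } }
  open_in p hp _ _ h₁ h₂ :=
    Subtype.ext (H.open_in p hp _ _ (congrArg Subtype.val h₁) (congrArg Subtype.val h₂))
  open_out p hp _ _ h₁ h₂ :=
    Subtype.ext (H.open_out p hp _ _ (congrArg Subtype.val h₁) (congrArg Subtype.val h₂))

def imageι : imageGraph f ⟶ H where
  f := ⟨⟨Subtype.val, Subtype.val, fun _ => rfl, fun _ => rfl⟩, fun _ => rfl, fun _ => rfl⟩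
  full := by
    rintro ⟨_, p, rfl⟩ hv e he
    obtain ⟨e', rfl, -⟩ := f.full p ((type_pp f p).symm.trans hv) e he
    exact ⟨⟨_, e', rfl⟩, rfl, he.imp Subtype.ext Subtype.ext⟩

def toImage : G ⟶ imageGraph f where
  f := ⟨⟨fun e => ⟨OHom.pe f e, e, rfl⟩, fun p => ⟨OHom.pp f p, p, rfl⟩,
    fun e => Subtype.ext (pp_src f e), fun e => Subtype.ext (pp_tgt f e)⟩,
    type_pp f, type_pe f⟩
  full v hv e he := by
    obtain ⟨e', he', hadj⟩ :=
      f.full v hv e.1 (he.imp (congrArg Subtype.val) (congrArg Subtype.val))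
    exact ⟨e', Subtype.ext he', hadj⟩

lemma toImage_comp_imageι : toImage f ≫ imageι f = f := rfl

instance : Mono (imageι f) :=
  mono_of_injective Subtype.val_injective Subtype.val_injective

lemma surjective_of_strongEpi [StrongEpi f] :
    Surjective (OHom.pp f) ∧ Surjective (OHom.pe f) := by
  have : StrongEpi (toImage f ≫ imageι f) := by rwa [toImage_comp_imageι]
  have := strongEpi_of_strongEpi (toImage f) (imageι f)
  have := isIso_of_mono_of_strongEpi (imageι f)
  refine ⟨fun p => ?_, fun e => ?_⟩
  · obtain ⟨⟨_, hp⟩, rfl⟩ := surjective_pp_of_isIso (imageι f) p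
    exact hp
  · obtain ⟨⟨_, he⟩, rfl⟩ := surjective_pe_of_isIso (imageι f) e
    exact he

end OHom

/-- A morphism in `OGraph` is a strong epimorphism iff it is surjective on points and
edges. -/
theorem ograph_strongEpi_iff_surjective {G H : OGraph} (f : G ⟶ H) :
    StrongEpi f ↔ (Function.Surjective (OHom.pp f) ∧ Function.Surjective (OHom.pe f)) :=
  ⟨fun _ => OHom.surjective_of_strongEpi f, fun h => strongEpi_of_surjective h.1 h.2⟩
end

section
/- The embedding functor S : OGraph → Graph/2_G reflects coequalizers: if the image under S of a fork is a coequalizer diagram in Graph/2_G, then the original fork is a coequalizer in OGraph. -/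
open CategoryTheory Limits

theorem GraphHom.ext' {G H : PreGraph} {f g : GraphHom G H}
    (h1 : f.pe = g.pe) (h2 : f.pp = g.pp) : f = g := by
  cases f; cases g
  cases h1; cases h2
  rfl

theorem TypedHom.ext' {X Y : TypedGraph} {f g : TypedHom X Y}
    (h1 : f.h.pe = g.h.pe) (h2 : f.h.pp = g.h.pp) : f = g :=
  TypedHom.ext (GraphHom.ext' h1 h2)

/-- Test object used to show coequalizer projections are surjective on points. -/
def testGraph : TypedGraph where
  G := { E := TyE × Prop × Prop
         P := TyP × Prop
         s := fun e => (twoG.s e.1, e.2.1)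
         t := fun e => (twoG.t e.1, e.2.2) }
  τ := { pe := fun e => e.1
         pp := fun p => p.1
         hs := fun _ => rfl
         ht := fun _ => rfl }

/-- The "characteristic" morphism of a predicate on points. -/
def chiHom (X : TypedGraph) (P : X.G.P → Prop) : TypedHom X testGraph where
  h := { pe := fun e => (X.τ.pe e, P (X.G.s e), P (X.G.t e))
         pp := fun p => (X.τ.pp p, P p)
         hs := fun e => Prod.ext (X.τ.hs e) rfl
         ht := fun e => Prod.ext (X.τ.ht e) rfl }
  comm_pp := fun _ => rfl
  comm_pe := fun _ => rfl

/-- The embedding functor `S : OGraph ⥤ Graph/2_G` reflects coequalizers: if the image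
of a fork under `S` is a coequalizer in `Graph/2_G`, the fork is a coequalizer in
`OGraph`. -/
theorem S_reflects_coequalizers {A B Q : OGraph} (f g : A ⟶ B) (q : B ⟶ Q)
    (w : f ≫ q = g ≫ q)
    (h : Nonempty (IsColimit (Cofork.ofπ (S.map q)
      (by rw [← S.map_comp, ← S.map_comp, w]) : Cofork (S.map f) (S.map g)))) :
    Nonempty (IsColimit (Cofork.ofπ q w)) := by
  obtain ⟨hc⟩ := h
  -- `q` is surjective on points.
  have surj : ∀ p : Q.X.G.P, ∃ b, q.f.h.pp b = p := by
    intro p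
    have key : chiHom Q.X (fun p => ∃ b, q.f.h.pp b = p) =
        chiHom Q.X (fun _ => True) := by
      apply Cofork.IsColimit.hom_ext hc
      show TypedHom.comp q.f _ = TypedHom.comp q.f _
      refine TypedHom.ext' (funext fun e => ?_) (funext fun b => ?_)
      · refine Prod.ext rfl (Prod.ext ?_ ?_)
        · show (∃ b, q.f.h.pp b = Q.X.G.s (q.f.h.pe e)) = True
          exact eq_true ⟨B.X.G.s e, (q.f.h.hs e).symm⟩
        · show (∃ b, q.f.h.pp b = Q.X.G.t (q.f.h.pe e)) = True
          exact eq_true ⟨B.X.G.t e, (q.f.h.ht e).symm⟩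
      · refine Prod.ext rfl ?_
        show (∃ b', q.f.h.pp b' = q.f.h.pp b) = True
        exact eq_true ⟨b, rfl⟩
    have := congrArg (fun φ : TypedHom Q.X testGraph => (φ.h.pp p).2) key
    simp only [chiHom] at this
    exact this ▸ trivial
  -- Build the colimit cocone in `OGraph`.
  refine ⟨Cofork.IsColimit.mk _ (fun s => ?_) (fun s => ?_) (fun s m hm => ?_)⟩
  case _ =>
    -- the descended morphism
    refine ⟨hc.desc (Cofork.ofπ (S.map s.π)
      (by rw [← S.map_comp, ← S.map_comp, s.condition])), ?_⟩
    set m := hc.desc (Cofork.ofπ (S.map s.π)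
      (by rw [← S.map_comp, ← S.map_comp, s.condition])) with hm
    have hfac : TypedHom.comp q.f m = s.π.f :=
      hc.fac (Cofork.ofπ (S.map s.π)
        (by rw [← S.map_comp, ← S.map_comp, s.condition])) WalkingParallelPair.one
    intro v hv e he
    obtain ⟨b, hb⟩ := surj v
    have hbV : B.X.τ.pp b = TyP.V := by
      rw [← q.f.comm_pp, hb]; exact hv
    have hmv : m.h.pp v = s.π.f.h.pp b := by
      rw [← hb, ← hfac]; rfl
    rw [hmv] at he
    obtain ⟨e', he', hadj⟩ := s.π.full b hbV e he
    refine ⟨q.f.h.pe e', ?_, ?_⟩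
    · show m.h.pe (q.f.h.pe e') = e
      rw [← he', ← hfac]; rfl
    · rcases hadj with hs' | ht'
      · left
        show Q.X.G.s (q.f.h.pe e') = v
        rw [q.f.h.hs]
        exact (congrArg q.f.h.pp hs').trans hb
      · right
        show Q.X.G.t (q.f.h.pe e') = v
        rw [q.f.h.ht]
        exact (congrArg q.f.h.pp ht').trans hb
  case _ =>
    -- factorization
    apply OHom.ext
    exact hc.fac (Cofork.ofπ (S.map s.π)
      (by rw [← S.map_comp, ← S.map_comp, s.condition])) WalkingParallelPair.one
  case _ =>
    -- uniqueness
    apply OHom.ext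
    refine Cofork.IsColimit.hom_ext hc ?_
    show TypedHom.comp q.f m.f = TypedHom.comp q.f _
    have : TypedHom.comp q.f m.f = s.π.f := congrArg OHom.f hm
    rw [this]
    exact (hc.fac (Cofork.ofπ (S.map s.π)
      (by rw [← S.map_comp, ← S.map_comp, s.condition])) WalkingParallelPair.one).symm
end

section
/- For an open-graph M, a monomorphism m : G → M where G has no isolated points, and the subtraction H := M −ₘ G with coboundary c : B → H, the square formed by the boundary map b : B → G, the coboundary c, m, and the induced inclusion of H into M is an S-adhesive pushout. Hence subtraction computes an S-adhesive pushout complement, and H is the unique open-graph such that plugging G and H along (b, c) recovers M. -/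
open CategoryTheory Limits

/-!
As `G` has no isolated points, the boundary map `b` is injective on points, so the pushout
of `b` along any `c : B → Y` in `Graph/2_G` is `Y` with the non-boundary points and all
edges of `G` adjoined. Comparing with this model, a square `(b, c, m, h)` is an `S`-pushout
exactly when `M` is, on points and on edges, the disjoint union of the image of `h` and of
the image under `m` of what `b` misses. For `H = M −ₘ G` this holds because the mono `m` is
injective. For any other complement `(H', c', h')` it forces `h'` to be injective with the
same image as `H → M`, whence `H ≅ H'` over `M`. The square is a pushout in `OGraph` too:
`m` and `H → M` are jointly surjective on points, so the mediating map out of `M` inherits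
fullness on vertices from the cocone.
-/

@[ext]
theorem TypedGraph.hom_ext {X Y : TypedGraph} {f g : X ⟶ Y} (he : ∀ e, f.h.pe e = g.h.pe e)
    (hp : ∀ p, f.h.pp p = g.h.pp p) : f = g := by
  obtain ⟨⟨_, _, _, _⟩, _, _⟩ := f
  obtain ⟨⟨_, _, _, _⟩, _, _⟩ := g
  obtain rfl : _ = _ := funext he
  obtain rfl : _ = _ := funext hp
  rfl

theorem TypedGraph.bijective_pp_of_isIso {X Y : TypedGraph} (f : X ⟶ Y) [IsIso f] :
    Function.Bijective f.h.pp :=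
  Function.bijective_iff_has_inverse.mpr ⟨(inv f).h.pp,
    fun p => congrArg (fun t : X ⟶ X => t.h.pp p) (IsIso.hom_inv_id f),
    fun p => congrArg (fun t : Y ⟶ Y => t.h.pp p) (IsIso.inv_hom_id f)⟩

theorem TypedGraph.bijective_pe_of_isIso {X Y : TypedGraph} (f : X ⟶ Y) [IsIso f] :
    Function.Bijective f.h.pe :=
  Function.bijective_iff_has_inverse.mpr ⟨(inv f).h.pe,
    fun e => congrArg (fun t : X ⟶ X => t.h.pe e) (IsIso.hom_inv_id f),
    fun e => congrArg (fun t : Y ⟶ Y => t.h.pe e) (IsIso.inv_hom_id f)⟩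

theorem TypedGraph.isIso_of_bijective {X Y : TypedGraph} (f : X ⟶ Y)
    (hp : Function.Bijective f.h.pp) (he : Function.Bijective f.h.pe) : IsIso f := by
  let ep := Equiv.ofBijective _ hp
  let ee := Equiv.ofBijective _ he
  let g : Y ⟶ X :=
    ⟨⟨ee.symm, ep.symm,
      fun e => hp.1 (by
        rw [← f.h.hs]
        exact (congrArg Y.G.s (ee.apply_symm_apply e)).trans (ep.apply_symm_apply _).symm),
      fun e => hp.1 (by
        rw [← f.h.ht]
        exact (congrArg Y.G.t (ee.apply_symm_apply e)).trans (ep.apply_symm_apply _).symm)⟩,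
     fun p => by rw [← f.comm_pp]; exact congrArg Y.τ.pp (ep.apply_symm_apply p),
     fun e => by rw [← f.comm_pe]; exact congrArg Y.τ.pe (ee.apply_symm_apply e)⟩
  refine ⟨g, ?_, ?_⟩ <;> ext x
  exacts [ee.symm_apply_apply x, ep.symm_apply_apply x, ee.apply_symm_apply x,
    ep.apply_symm_apply x]

@[ext]
theorem OGraph.hom_ext {A B : OGraph} {f g : A ⟶ B} (he : ∀ e, OHom.pe f e = OHom.pe g e)
    (hp : ∀ p, OHom.pp f p = OHom.pp g p) : f = g :=
  OHom.ext (TypedGraph.hom_ext he hp)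

namespace OHom

variable {A B : OGraph} (f : A ⟶ B)

theorem src_pe (e : A.X.G.E) : B.X.G.s (f.pe e) = f.pp (A.X.G.s e) := f.f.h.hs e

theorem tgt_pe (e : A.X.G.E) : B.X.G.t (f.pe e) = f.pp (A.X.G.t e) := f.f.h.ht e

theorem type_pp_s12 (p : A.X.G.P) : B.X.τ.pp (f.pp p) = A.X.τ.pp p := f.f.comm_pp p

theorem type_pe_s12 (e : A.X.G.E) : B.X.τ.pe (f.pe e) = A.X.τ.pe e := f.f.comm_pe e

theorem incident_map {e : A.X.G.E} {p : A.X.G.P} (h : A.X.G.s e = p ∨ A.X.G.t e = p) :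
    B.X.G.s (f.pe e) = f.pp p ∨ B.X.G.t (f.pe e) = f.pp p :=
  h.imp (fun h => by rw [src_pe, h]) (fun h => by rw [tgt_pe, h])

theorem mono_of_injective_s12 (hp : Function.Injective f.pp) (he : Function.Injective f.pe) :
    Mono f :=
  ⟨fun a b hab => by
    ext x
    · exact he (congrArg (fun t => OHom.pe t x) hab)
    · exact hp (congrArg (fun t => OHom.pp t x) hab)⟩

end OHom

theorem TyE.src_eps_or_tgt_eps (x : TyE) : twoG.s x = TyP.eps ∨ twoG.t x = TyP.eps := by
  cases x
  exacts [Or.inr rfl, Or.inl rfl, Or.inl rfl]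

theorem TyE.src_eq_eps_of_tgt_eq_V {x : TyE} (h : twoG.t x = TyP.V) : twoG.s x = TyP.eps := by
  cases x <;> first | rfl | cases h

theorem OGraph.eq_of_incident_vertices (A : OGraph) {e : A.X.G.E} {v w : A.X.G.P}
    (hv : A.X.τ.pp v = TyP.V) (hw : A.X.τ.pp w = TyP.V)
    (hve : A.X.G.s e = v ∨ A.X.G.t e = v) (hwe : A.X.G.s e = w ∨ A.X.G.t e = w) : v = w := by
  have no_VV : A.X.τ.pp (A.X.G.t e) = TyP.V → A.X.τ.pp (A.X.G.s e) ≠ TyP.V := fun ht hs => by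
    rw [← A.X.τ.ht] at ht; rw [← A.X.τ.hs, TyE.src_eq_eps_of_tgt_eq_V ht] at hs; cases hs
  rcases hve with rfl | rfl <;> rcases hwe with h | h
  exacts [h, (no_VV (h ▸ hw) hv).elim, (no_VV hv (h ▸ hw)).elim, h]

def singlePoint (t : TyP) : OGraph where
  X := { G := { E := Empty, P := PUnit, s := Empty.elim, t := Empty.elim }
         τ := { pe := Empty.elim, pp := fun _ => t, hs := fun e => e.elim, ht := fun e => e.elim } }
  open_in := fun _ _ e => e.elim
  open_out := fun _ _ e => e.elim

def singlePoint.pick {A : OGraph} {t : TyP} (p : A.X.G.P) (hp : A.X.τ.pp p = t)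
    (hfull : t = TyP.V → ∀ e, A.X.G.s e ≠ p ∧ A.X.G.t e ≠ p) : singlePoint t ⟶ A :=
  ⟨⟨⟨Empty.elim, fun _ => p, fun e => e.elim, fun e => e.elim⟩, fun _ => hp, fun e => e.elim⟩,
   fun _ hv e he => (he.elim (hfull hv e).1 (hfull hv e).2).elim⟩

section MonoInjective

variable {A B : OGraph} (m : A ⟶ B) [Mono m]

theorem eq_of_mono_of_pp_eq_of_edgeless {p q : A.X.G.P} {t : TyP} (hp : A.X.τ.pp p = t)
    (hq : A.X.τ.pp q = t) (hfp : t = TyP.V → ∀ e, A.X.G.s e ≠ p ∧ A.X.G.t e ≠ p)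
    (hfq : t = TyP.V → ∀ e, A.X.G.s e ≠ q ∧ A.X.G.t e ≠ q) (h : OHom.pp m p = OHom.pp m q) :
    p = q := by
  have : singlePoint.pick p hp hfp ≫ m = singlePoint.pick q hq hfq ≫ m := by
    ext x
    exacts [x.elim, h]
  exact congrArg (fun f => OHom.pp f PUnit.unit) ((cancel_mono m).mp this)

theorem eq_of_mono_of_pp_eq_eps {p q : A.X.G.P} (hp : A.X.τ.pp p = TyP.eps)
    (hq : A.X.τ.pp q = TyP.eps) (h : OHom.pp m p = OHom.pp m q) : p = q :=
  eq_of_mono_of_pp_eq_of_edgeless m hp hq (fun h => by cases h) (fun h => by cases h) h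

theorem OHom.pe_injective_of_mono : Function.Injective (OHom.pe m) := by
  intro e₁ e₂ h
  have hτ : A.X.τ.pe e₁ = A.X.τ.pe e₂ := by rw [← OHom.type_pe_s12 m, h, OHom.type_pe_s12]
  rcases TyE.src_eps_or_tgt_eps (A.X.τ.pe e₁) with hs | ht
  · have hs₁ : A.X.τ.pp (A.X.G.s e₁) = TyP.eps := by rw [← A.X.τ.hs]; exact hs
    have hs₂ : A.X.τ.pp (A.X.G.s e₂) = TyP.eps := by rw [← A.X.τ.hs, ← hτ]; exact hs
    refine A.open_out _ hs₂ e₁ e₂ (eq_of_mono_of_pp_eq_eps m hs₁ hs₂ ?_) rfl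
    rw [← OHom.src_pe, h, OHom.src_pe]
  · have ht₁ : A.X.τ.pp (A.X.G.t e₁) = TyP.eps := by rw [← A.X.τ.ht]; exact ht
    have ht₂ : A.X.τ.pp (A.X.G.t e₂) = TyP.eps := by rw [← A.X.τ.ht, ← hτ]; exact ht
    refine A.open_in _ ht₂ e₁ e₂ (eq_of_mono_of_pp_eq_eps m ht₁ ht₂ ?_) rfl
    rw [← OHom.tgt_pe, h, OHom.tgt_pe]

theorem OHom.pp_injective_of_mono : Function.Injective (OHom.pp m) := by
  intro v w h
  have hτ : A.X.τ.pp v = A.X.τ.pp w := by rw [← OHom.type_pp_s12 m, h, OHom.type_pp_s12]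
  cases hv : A.X.τ.pp v with
  | eps => exact eq_of_mono_of_pp_eq_eps m hv (hτ ▸ hv) h
  | V =>
    have hw : A.X.τ.pp w = TyP.V := hτ ▸ hv
    -- an edge at `v` is pulled back by fullness at `w`, and is then incident to both
    by_cases hadj : ∃ e, A.X.G.s e = v ∨ A.X.G.t e = v
    · obtain ⟨e, he⟩ := hadj
      obtain ⟨e', he', hwe'⟩ := m.full w hw (OHom.pe m e) (h ▸ OHom.incident_map m he :)
      obtain rfl := OHom.pe_injective_of_mono m he'
      exact A.eq_of_incident_vertices hv hw he hwe'
    · have hvfree : ∀ e, A.X.G.s e ≠ v ∧ A.X.G.t e ≠ v := fun e => not_or.mp (not_exists.mp hadj e)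
      have hwfree : ∀ e, A.X.G.s e ≠ w ∧ A.X.G.t e ≠ w := fun e => not_or.mp fun hwe => by
        obtain ⟨e', -, hve'⟩ := m.full v hv (OHom.pe m e) (h ▸ OHom.incident_map m hwe :)
        exact hadj ⟨e', hve'⟩
      exact eq_of_mono_of_pp_eq_of_edgeless m hv hw (fun _ => hvfree) (fun _ => hwfree) h

end MonoInjective

section Subtraction

variable {G M : OGraph} (m : G ⟶ M)

theorem isOutput_of_pp_eq_src {e : M.X.G.E} (he : e ∉ Set.range (OHom.pe m)) {q : G.X.G.P}
    (hq : OHom.pp m q = M.X.G.s e) : IsOutput G q := by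
  have hq_eps : IsEdgePoint G q := by
    cases hτ : G.X.τ.pp q with
    | V => obtain ⟨f, hf, -⟩ := m.full q hτ e (Or.inl hq.symm); exact absurd ⟨f, hf⟩ he
    | eps => exact hτ
  refine ⟨hq_eps, fun f hf => he ⟨f, M.open_out _ ?_ _ _ (by rw [OHom.src_pe, hf]) hq.symm⟩⟩
  rw [OHom.type_pp_s12]; exact hq_eps

theorem isInput_of_pp_eq_tgt {e : M.X.G.E} (he : e ∉ Set.range (OHom.pe m)) {q : G.X.G.P}
    (hq : OHom.pp m q = M.X.G.t e) : IsInput G q := by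
  have hq_eps : IsEdgePoint G q := by
    cases hτ : G.X.τ.pp q with
    | V => obtain ⟨f, hf, -⟩ := m.full q hτ e (Or.inr hq.symm); exact absurd ⟨f, hf⟩ he
    | eps => exact hτ
  refine ⟨hq_eps, fun f hf => he ⟨f, M.open_in _ ?_ _ _ (by rw [OHom.tgt_pe, hf]) hq.symm⟩⟩
  rw [OHom.type_pp_s12]; exact hq_eps

abbrev SubtractionPt := {p // p ∉ Set.range (OHom.pp m)} ⊕ (boundaryGraph G).X.G.P

abbrev SubtractionEdge := {e // e ∉ Set.range (OHom.pe m)}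

noncomputable def subtractionSrc (e : SubtractionEdge m) : SubtractionPt m :=
  open Classical in
  if hs : M.X.G.s e.1 ∈ Set.range (OHom.pp m) then
    Sum.inr (Sum.inr ⟨hs.choose, isOutput_of_pp_eq_src m e.2 hs.choose_spec⟩)
  else Sum.inl ⟨_, hs⟩

noncomputable def subtractionTgt (e : SubtractionEdge m) : SubtractionPt m :=
  open Classical in
  if ht : M.X.G.t e.1 ∈ Set.range (OHom.pp m) then
    Sum.inr (Sum.inl ⟨ht.choose, isInput_of_pp_eq_tgt m e.2 ht.choose_spec⟩)
  else Sum.inl ⟨_, ht⟩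

def subtractionInclPt : SubtractionPt m → M.X.G.P :=
  Sum.elim Subtype.val fun q => OHom.pp m (OHom.pp (boundaryMap G) q)

theorem subtractionSrc_of_not_mem (e : SubtractionEdge m)
    (h : M.X.G.s e.1 ∉ Set.range (OHom.pp m)) :
    subtractionSrc m e = Sum.inl ⟨_, h⟩ :=
  dif_neg h

theorem subtractionTgt_of_not_mem (e : SubtractionEdge m)
    (h : M.X.G.t e.1 ∉ Set.range (OHom.pp m)) :
    subtractionTgt m e = Sum.inl ⟨_, h⟩ :=
  dif_neg h

theorem subtractionInclPt_src (e : SubtractionEdge m) :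
    subtractionInclPt m (subtractionSrc m e) = M.X.G.s e.1 := by
  unfold subtractionSrc
  split
  · next hs => exact hs.choose_spec
  · rfl

theorem subtractionInclPt_tgt (e : SubtractionEdge m) :
    subtractionInclPt m (subtractionTgt m e) = M.X.G.t e.1 := by
  unfold subtractionTgt
  split
  · next ht => exact ht.choose_spec
  · rfl

theorem type_subtractionInclPt (x : SubtractionPt m) :
    M.X.τ.pp (subtractionInclPt m x) =
      Sum.elim (fun p => M.X.τ.pp p.1) (fun _ => TyP.eps) x := by
  rcases x with p | q
  · rfl
  · exact OHom.type_pp_s12 (boundaryMap G ≫ m) q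

noncomputable def subtraction : OGraph where
  X := { G := { E := SubtractionEdge m, P := SubtractionPt m
                s := subtractionSrc m, t := subtractionTgt m }
         τ := { pe := fun e => M.X.τ.pe e.1
                pp := Sum.elim (fun p => M.X.τ.pp p.1) (fun _ => TyP.eps)
                hs := fun e => by
                  rw [← type_subtractionInclPt, subtractionInclPt_src]; exact M.X.τ.hs e.1
                ht := fun e => by
                  rw [← type_subtractionInclPt, subtractionInclPt_tgt]; exact M.X.τ.ht e.1 } }
  open_in p hp e₁ e₂ h₁ h₂ := Subtype.ext <|
    M.open_in (subtractionInclPt m p) ((type_subtractionInclPt m p).trans hp) _ _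
      ((subtractionInclPt_tgt m e₁).symm.trans (congrArg _ h₁))
      ((subtractionInclPt_tgt m e₂).symm.trans (congrArg _ h₂))
  open_out p hp e₁ e₂ h₁ h₂ := Subtype.ext <|
    M.open_out (subtractionInclPt m p) ((type_subtractionInclPt m p).trans hp) _ _
      ((subtractionInclPt_src m e₁).symm.trans (congrArg _ h₁))
      ((subtractionInclPt_src m e₂).symm.trans (congrArg _ h₂))

noncomputable def coboundary : boundaryGraph G ⟶ subtraction m :=
  ⟨⟨⟨Empty.elim, Sum.inr, fun e => e.elim, fun e => e.elim⟩, fun _ => rfl, fun e => e.elim⟩,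
   fun _ hv => by cases hv⟩

noncomputable def subtractionIncl : subtraction m ⟶ M :=
  ⟨⟨⟨Subtype.val, subtractionInclPt m, fun e => (subtractionInclPt_src m e).symm,
      fun e => (subtractionInclPt_tgt m e).symm⟩, type_subtractionInclPt m, fun _ => rfl⟩,
   by
    rintro (⟨p, hp⟩ | q) hv e he
    · have hne : e ∉ Set.range (OHom.pe m) := by
        rintro ⟨f, rfl⟩
        exact hp (he.elim (fun h => ⟨_, (OHom.src_pe m f).symm.trans h⟩)
          (fun h => ⟨_, (OHom.tgt_pe m f).symm.trans h⟩))
      refine ⟨⟨e, hne⟩, rfl, he.imp (fun h => ?_) (fun h => ?_)⟩ <;> subst h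
      exacts [subtractionSrc_of_not_mem m ⟨e, hne⟩ hp, subtractionTgt_of_not_mem m ⟨e, hne⟩ hp]
    · cases hv⟩

theorem boundaryMap_comp_eq_coboundary_comp :
    boundaryMap G ≫ m = coboundary m ≫ subtractionIncl m := by
  ext x
  exacts [x.elim, rfl]

theorem mem_range_or_mem_range_subtractionIncl (p : M.X.G.P) :
    p ∈ Set.range (OHom.pp m) ∨ p ∈ Set.range (OHom.pp (subtractionIncl m)) :=
  or_iff_not_imp_left.mpr fun hp => ⟨Sum.inl ⟨p, hp⟩, rfl⟩

end Subtraction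

theorem boundaryMap_pp_injective {G : OGraph} (hiso : ∀ p, ¬ IsIsolated G p) :
    Function.Injective (OHom.pp (boundaryMap G)) := by
  rintro (⟨p, hp⟩ | ⟨p, hp⟩) (⟨q, hq⟩ | ⟨q, hq⟩) (h : p = q) <;> subst h
  exacts [rfl, (hiso p ⟨hp, hq⟩).elim, (hiso p ⟨hq, hp⟩).elim, rfl]

section BoundaryPushout

variable {G : OGraph} {Y : TypedGraph} (c : S.obj (boundaryGraph G) ⟶ Y)

noncomputable def boundaryPushout.glue (g : G.X.G.P) :
    Y.G.P ⊕ {g : G.X.G.P // g ∉ Set.range (OHom.pp (boundaryMap G))} :=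
  open Classical in
  if hg : g ∈ Set.range (OHom.pp (boundaryMap G)) then Sum.inl (c.h.pp hg.choose)
  else Sum.inr ⟨g, hg⟩

namespace boundaryPushout

theorem glue_of_not_mem {g : G.X.G.P} (hg : g ∉ Set.range (OHom.pp (boundaryMap G))) :
    glue c g = Sum.inr ⟨g, hg⟩ :=
  dif_neg hg

theorem glue_boundaryMap (hiso : ∀ p, ¬ IsIsolated G p) (q : (boundaryGraph G).X.G.P) :
    glue c (OHom.pp (boundaryMap G) q) = Sum.inl (c.h.pp q) := by
  have hq : OHom.pp (boundaryMap G) q ∈ Set.range (OHom.pp (boundaryMap G)) := ⟨q, rfl⟩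
  rw [glue, dif_pos hq, boundaryMap_pp_injective hiso hq.choose_spec]

theorem elim_glue {W : TypedGraph} (u : G.X ⟶ W) (v : Y ⟶ W)
    (w : S.map (boundaryMap G) ≫ u = c ≫ v) (g : G.X.G.P) :
    Sum.elim v.h.pp (fun r => u.h.pp r.1) (glue c g) = u.h.pp g := by
  unfold glue
  split
  · next hg =>
    exact (congrArg (fun t => t.h.pp hg.choose) w).symm.trans (congrArg u.h.pp hg.choose_spec)
  · rfl

theorem type_glue (g : G.X.G.P) :
    Sum.elim Y.τ.pp (fun r => G.X.τ.pp r.1) (glue c g) = G.X.τ.pp g := by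
  unfold glue
  split
  · next hg =>
    exact ((c.comm_pp _).trans ((boundaryMap G).f.comm_pp _).symm).trans
      (congrArg G.X.τ.pp hg.choose_spec)
  · rfl

end boundaryPushout

open boundaryPushout in
noncomputable def boundaryPushout : TypedGraph where
  G := { E := G.X.G.E ⊕ Y.G.E
         P := Y.G.P ⊕ {g : G.X.G.P // g ∉ Set.range (OHom.pp (boundaryMap G))}
         s := Sum.elim (fun f => glue c (G.X.G.s f)) (fun y => Sum.inl (Y.G.s y))
         t := Sum.elim (fun f => glue c (G.X.G.t f)) (fun y => Sum.inl (Y.G.t y)) }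
  τ := { pe := Sum.elim G.X.τ.pe Y.τ.pe
         pp := Sum.elim Y.τ.pp (fun r => G.X.τ.pp r.1)
         hs := by
           rintro (f | y)
           exacts [(G.X.τ.hs f).trans (type_glue c _).symm, Y.τ.hs y]
         ht := by
           rintro (f | y)
           exacts [(G.X.τ.ht f).trans (type_glue c _).symm, Y.τ.ht y] }

namespace boundaryPushout

noncomputable def inl : G.X ⟶ boundaryPushout c :=
  ⟨⟨Sum.inl, glue c, fun _ => rfl, fun _ => rfl⟩, type_glue c, fun _ => rfl⟩

def inr : Y ⟶ boundaryPushout c :=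
  ⟨⟨Sum.inr, Sum.inl, fun _ => rfl, fun _ => rfl⟩, fun _ => rfl, fun _ => rfl⟩

variable {W : TypedGraph} (u : G.X ⟶ W) (v : Y ⟶ W) (w : S.map (boundaryMap G) ≫ u = c ≫ v)

def desc : boundaryPushout c ⟶ W :=
  ⟨⟨Sum.elim u.h.pe v.h.pe, Sum.elim v.h.pp (fun r => u.h.pp r.1),
    by
      rintro (f | y)
      exacts [(u.h.hs f).trans (elim_glue c u v w _).symm, v.h.hs y],
    by
      rintro (f | y)
      exacts [(u.h.ht f).trans (elim_glue c u v w _).symm, v.h.ht y]⟩,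
   by
    rintro (y | r)
    exacts [v.comm_pp y, u.comm_pp r.1],
   by
    rintro (f | y)
    exacts [u.comm_pe f, v.comm_pe y]⟩

theorem inl_desc : inl c ≫ desc c u v w = u := by
  ext x
  exacts [rfl, elim_glue c u v w x]

theorem inr_desc : inr c ≫ desc c u v w = v := rfl

end boundaryPushout

open boundaryPushout in
theorem isPushout_boundaryPushout (hiso : ∀ p, ¬ IsIsolated G p) :
    IsPushout (S.map (boundaryMap G)) c (inl c) (inr c) :=
  IsPushout.of_isColimit' ⟨by ext x; exacts [x.elim, glue_boundaryMap c hiso x]⟩ <|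
    PushoutCocone.IsColimit.mk _ (fun s => desc c s.inl s.inr s.condition)
      (fun s => inl_desc c s.inl s.inr s.condition) (fun s => inr_desc c s.inl s.inr s.condition)
      fun s φ h₁ h₂ => by
        refine TypedGraph.hom_ext ?_ ?_
        · rintro (f | y)
          exacts [congrArg (fun t => t.h.pe f) h₁, congrArg (fun t => t.h.pe y) h₂]
        · rintro (y | ⟨g, hg⟩)
          · exact congrArg (fun t => t.h.pp y) h₂
          · have h := congrArg (fun t => t.h.pp g) h₁
            change φ.h.pp (glue c g) = _ at h
            rwa [glue_of_not_mem c hg] at h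

end BoundaryPushout

section BoundaryPushoutCharacterization

open boundaryPushout

variable {G : OGraph} {Y W : TypedGraph} {c : S.obj (boundaryGraph G) ⟶ Y} {u : G.X ⟶ W}
  {h : Y ⟶ W}

theorem isPushout_boundaryMap_iff_bijective (hiso : ∀ p, ¬ IsIsolated G p)
    (w : S.map (boundaryMap G) ≫ u = c ≫ h) :
    IsPushout (S.map (boundaryMap G)) c u h ↔
      Function.Bijective (Sum.elim h.h.pp fun r : {g // g ∉ Set.range (OHom.pp (boundaryMap G))} =>
        u.h.pp r.1) ∧
      Function.Bijective (Sum.elim u.h.pe h.h.pe) := by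
  have hQ := isPushout_boundaryPushout c hiso
  constructor
  · intro hP
    have hdesc : (hQ.isoIsPushout _ _ hP).hom = desc c u h w :=
      hQ.hom_ext ((hQ.inl_isoIsPushout_hom _ _ hP).trans (inl_desc c u h w).symm)
        ((hQ.inr_isoIsPushout_hom _ _ hP).trans (inr_desc c u h w).symm)
    have : IsIso (desc c u h w) := hdesc ▸ inferInstance
    exact ⟨TypedGraph.bijective_pp_of_isIso (desc c u h w),
      TypedGraph.bijective_pe_of_isIso (desc c u h w)⟩
  · rintro ⟨hp, he⟩
    have := TypedGraph.isIso_of_bijective (desc c u h w) hp he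
    exact hQ.of_iso (Iso.refl _) (Iso.refl _) (Iso.refl _) (asIso (desc c u h w))
      (by simp) (by simp) ((inl_desc c u h w).trans (Category.id_comp u).symm)
      ((inr_desc c u h w).trans (Category.id_comp h).symm)

end BoundaryPushoutCharacterization

section SubtractionPushout

variable {G M : OGraph} (m : G ⟶ M) [Mono m]

theorem subtractionInclPt_injective (hiso : ∀ p, ¬ IsIsolated G p) :
    Function.Injective (subtractionInclPt m) :=
  Subtype.val_injective.sumElim
    ((OHom.pp_injective_of_mono m).comp (boundaryMap_pp_injective hiso))
    fun p _ h => p.2 ⟨_, h.symm⟩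

theorem bijective_subtractionInclPt_sumElim (hiso : ∀ p, ¬ IsIsolated G p) :
    Function.Bijective (Sum.elim (subtractionInclPt m)
      fun r : {g // g ∉ Set.range (OHom.pp (boundaryMap G))} => OHom.pp m r.1) := by
  refine ⟨(subtractionInclPt_injective m hiso).sumElim
    ((OHom.pp_injective_of_mono m).comp Subtype.val_injective) ?_, fun p => ?_⟩
  · rintro (p | q) ⟨g, hg⟩ h
    exacts [p.2 ⟨g, h.symm⟩, hg ⟨q, OHom.pp_injective_of_mono m h⟩]
  · by_cases hp : p ∈ Set.range (OHom.pp m)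
    · obtain ⟨g, rfl⟩ := hp
      by_cases hg : g ∈ Set.range (OHom.pp (boundaryMap G))
      · obtain ⟨q, rfl⟩ := hg
        exact ⟨Sum.inl (Sum.inr q), rfl⟩
      · exact ⟨Sum.inr ⟨g, hg⟩, rfl⟩
    · exact ⟨Sum.inl (Sum.inl ⟨p, hp⟩), rfl⟩

theorem bijective_pe_sumElim_subtractionEdge :
    Function.Bijective (Sum.elim (OHom.pe m) (Subtype.val : SubtractionEdge m → M.X.G.E)) := by
  refine ⟨(OHom.pe_injective_of_mono m).sumElim Subtype.val_injective
    fun f e h => e.2 ⟨f, h⟩, fun e => ?_⟩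
  by_cases he : e ∈ Set.range (OHom.pe m)
  · obtain ⟨f, rfl⟩ := he
    exact ⟨Sum.inl f, rfl⟩
  · exact ⟨Sum.inr ⟨e, he⟩, rfl⟩

theorem isPushout_S_subtraction (hiso : ∀ p, ¬ IsIsolated G p) :
    IsPushout (S.map (boundaryMap G)) (S.map (coboundary m)) (S.map m)
      (S.map (subtractionIncl m)) :=
  (isPushout_boundaryMap_iff_bijective hiso
    (congrArg S.map (boundaryMap_comp_eq_coboundary_comp m))).mpr
    ⟨bijective_subtractionInclPt_sumElim m hiso, bijective_pe_sumElim_subtractionEdge m⟩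

end SubtractionPushout

theorem exists_incident_lift_of_comp_eq {B D W : OGraph} (i : B ⟶ D) (d : D.X ⟶ W.X)
    (u : B ⟶ W) (hu : i.f ≫ d = u.f) {x : B.X.G.P} (hx : B.X.τ.pp x = TyP.V) {e : W.X.G.E}
    (he : W.X.G.s e = d.h.pp (OHom.pp i x) ∨ W.X.G.t e = d.h.pp (OHom.pp i x)) :
    ∃ e', d.h.pe e' = e ∧ (D.X.G.s e' = OHom.pp i x ∨ D.X.G.t e' = OHom.pp i x) := by
  have hux : d.h.pp (OHom.pp i x) = OHom.pp u x := congrArg (fun t => t.h.pp x) hu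
  obtain ⟨e', rfl, hxe'⟩ := u.full x hx e (by rwa [hux] at he)
  exact ⟨OHom.pe i e', congrArg (fun t => t.h.pe e') hu, OHom.incident_map i hxe'⟩

theorem fullOnVertices_of_comp_eq {B C D W : OGraph} (i : B ⟶ D) (j : C ⟶ D)
    (hsurj : ∀ p, p ∈ Set.range (OHom.pp i) ∨ p ∈ Set.range (OHom.pp j)) (d : D.X ⟶ W.X)
    (u : B ⟶ W) (v : C ⟶ W) (hu : i.f ≫ d = u.f) (hv : j.f ≫ d = v.f) : FullOnVertices d := by
  intro p hp e he
  rcases hsurj p with ⟨x, rfl⟩ | ⟨y, rfl⟩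
  · exact exists_incident_lift_of_comp_eq i d u hu ((OHom.type_pp_s12 i x).symm.trans hp) he
  · exact exists_incident_lift_of_comp_eq j d v hv ((OHom.type_pp_s12 j y).symm.trans hp) he

theorem isPushout_of_isPushout_S {A B C D : OGraph} {f : A ⟶ B} {g : A ⟶ C} {i : B ⟶ D}
    {j : C ⟶ D} (hS : IsPushout (S.map f) (S.map g) (S.map i) (S.map j))
    (hsurj : ∀ p, p ∈ Set.range (OHom.pp i) ∨ p ∈ Set.range (OHom.pp j)) :
    IsPushout f g i j :=
  IsPushout.of_isColimit' ⟨OHom.ext hS.w⟩ <|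
    PushoutCocone.IsColimit.mk _
      (fun s => ⟨hS.desc s.inl.f s.inr.f (congrArg OHom.f s.condition),
        fullOnVertices_of_comp_eq i j hsurj _ s.inl s.inr (hS.inl_desc _ _ _)
          (hS.inr_desc _ _ _)⟩)
      (fun _ => OHom.ext (hS.inl_desc _ _ _)) (fun _ => OHom.ext (hS.inr_desc _ _ _))
      fun _ _ h₁ h₂ => OHom.ext <| hS.hom_ext
        ((congrArg OHom.f h₁).trans (hS.inl_desc _ _ _).symm)
        ((congrArg OHom.f h₂).trans (hS.inr_desc _ _ _).symm)

section PushoutComplement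

variable {G : OGraph} {Y W : TypedGraph} {c : S.obj (boundaryGraph G) ⟶ Y} {u : G.X ⟶ W}
  {h : Y ⟶ W}

theorem injective_pp_of_isPushout_boundaryMap (hiso : ∀ p, ¬ IsIsolated G p)
    (hP : IsPushout (S.map (boundaryMap G)) c u h) : Function.Injective h.h.pp :=
  (Sum.elim_injective.mp ((isPushout_boundaryMap_iff_bijective hiso hP.w).mp hP).1.1).1

theorem injective_pe_of_isPushout_boundaryMap (hiso : ∀ p, ¬ IsIsolated G p)
    (hP : IsPushout (S.map (boundaryMap G)) c u h) : Function.Injective h.h.pe :=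
  (Sum.elim_injective.mp ((isPushout_boundaryMap_iff_bijective hiso hP.w).mp hP).2.1).2.1

theorem range_pp_of_isPushout_boundaryMap (hiso : ∀ p, ¬ IsIsolated G p)
    (hP : IsPushout (S.map (boundaryMap G)) c u h) :
    Set.range h.h.pp = (Set.range u.h.pp)ᶜ ∪ Set.range (S.map (boundaryMap G) ≫ u).h.pp := by
  obtain ⟨⟨hinj, hsurj⟩, -⟩ := (isPushout_boundaryMap_iff_bijective hiso hP.w).mp hP
  have hdisj := (Sum.elim_injective.mp hinj).2.2
  ext p
  constructor
  · rintro ⟨y, rfl⟩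
    refine or_iff_not_imp_left.mpr fun hy => ?_
    obtain ⟨g, hg⟩ := not_not.mp hy
    by_cases hgb : g ∈ Set.range (OHom.pp (boundaryMap G))
    · obtain ⟨q, rfl⟩ := hgb
      exact ⟨q, hg⟩
    · exact (hdisj y ⟨g, hgb⟩ hg.symm).elim
  · rintro (hp | ⟨q, rfl⟩)
    · obtain ⟨(y | ⟨g, _⟩), hx⟩ := hsurj p
      exacts [⟨y, hx⟩, (hp ⟨g, hx⟩).elim]
    · exact ⟨c.h.pp q, (congrArg (fun t => t.h.pp q) hP.w).symm⟩

theorem range_pe_of_isPushout_boundaryMap (hiso : ∀ p, ¬ IsIsolated G p)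
    (hP : IsPushout (S.map (boundaryMap G)) c u h) :
    Set.range h.h.pe = (Set.range u.h.pe)ᶜ := by
  obtain ⟨-, hinj, hsurj⟩ := (isPushout_boundaryMap_iff_bijective hiso hP.w).mp hP
  ext e
  constructor
  · rintro ⟨y, rfl⟩ ⟨f, hf⟩
    exact (Sum.elim_injective.mp hinj).2.2 f y hf
  · intro he
    obtain ⟨(f | y), rfl⟩ := hsurj e
    exacts [(he ⟨f, rfl⟩).elim, ⟨y, rfl⟩]

end PushoutComplement

namespace OHom

variable {A B C : OGraph}

noncomputable def liftOfRangeSubset (f : A ⟶ C) (g : B ⟶ C) (hgp : Function.Injective g.pp)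
    (hge : Function.Injective g.pe) (hp : Set.range f.pp ⊆ Set.range g.pp)
    (he : Set.range f.pe ⊆ Set.range g.pe) : A ⟶ B :=
  let kp := fun a => (Equiv.ofInjective _ hgp).symm ⟨f.pp a, hp ⟨a, rfl⟩⟩
  let ke := fun e => (Equiv.ofInjective _ hge).symm ⟨f.pe e, he ⟨e, rfl⟩⟩
  have hkp : ∀ a, g.pp (kp a) = f.pp a := fun a => Equiv.apply_ofInjective_symm hgp _
  have hke : ∀ e, g.pe (ke e) = f.pe e := fun e => Equiv.apply_ofInjective_symm hge _
  ⟨⟨⟨ke, kp,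
      fun e => hgp (by rw [← src_pe, hke, hkp, src_pe]),
      fun e => hgp (by rw [← tgt_pe, hke, hkp, tgt_pe])⟩,
     fun a => by rw [← type_pp_s12 g, hkp, type_pp_s12],
     fun e => by rw [← type_pe_s12 g, hke, type_pe_s12]⟩,
   fun v hv e hve => by
    have hgve := incident_map (p := kp v) g hve
    rw [hkp] at hgve
    obtain ⟨e', he', hve'⟩ := f.full v hv (g.pe e) hgve
    exact ⟨e', hge ((hke e').trans he'), hve'⟩⟩

theorem liftOfRangeSubset_comp (f : A ⟶ C) (g : B ⟶ C) (hgp : Function.Injective g.pp)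
    (hge : Function.Injective g.pe) (hp : Set.range f.pp ⊆ Set.range g.pp)
    (he : Set.range f.pe ⊆ Set.range g.pe) : liftOfRangeSubset f g hgp hge hp he ≫ g = f := by
  ext x
  exacts [Equiv.apply_ofInjective_symm hge _, Equiv.apply_ofInjective_symm hgp _]

theorem exists_iso_comp_eq_of_range_eq (f : A ⟶ C) (g : B ⟶ C)
    (hfp : Function.Injective f.pp) (hfe : Function.Injective f.pe) (hgp : Function.Injective g.pp)
    (hge : Function.Injective g.pe) (hp : Set.range f.pp = Set.range g.pp)
    (he : Set.range f.pe = Set.range g.pe) : ∃ φ : A ≅ B, φ.hom ≫ g = f := by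
  have := mono_of_injective_s12 f hfp hfe
  have := mono_of_injective_s12 g hgp hge
  refine ⟨⟨liftOfRangeSubset f g hgp hge hp.le he.le, liftOfRangeSubset g f hfp hfe hp.ge he.ge,
    ?_, ?_⟩, liftOfRangeSubset_comp f g hgp hge hp.le he.le⟩
  · simp [← cancel_mono f, liftOfRangeSubset_comp]
  · simp [← cancel_mono g, liftOfRangeSubset_comp]

end OHom

theorem pushoutComplement_unique {G M : OGraph} {m : G ⟶ M} (hiso : ∀ p, ¬ IsIsolated G p)
    {H₁ H₂ : OGraph} {c₁ : boundaryGraph G ⟶ H₁} {h₁ : H₁ ⟶ M} {c₂ : boundaryGraph G ⟶ H₂}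
    {h₂ : H₂ ⟶ M}
    (hP₁ : IsPushout (S.map (boundaryMap G)) (S.map c₁) (S.map m) (S.map h₁))
    (hP₂ : IsPushout (S.map (boundaryMap G)) (S.map c₂) (S.map m) (S.map h₂)) :
    ∃ φ : H₁ ≅ H₂, c₁ ≫ φ.hom = c₂ ∧ φ.hom ≫ h₂ = h₁ := by
  have hpp₂ := injective_pp_of_isPushout_boundaryMap hiso hP₂
  have hpe₂ := injective_pe_of_isPushout_boundaryMap hiso hP₂
  obtain ⟨φ, hφ⟩ := OHom.exists_iso_comp_eq_of_range_eq h₁ h₂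
    (injective_pp_of_isPushout_boundaryMap hiso hP₁)
    (injective_pe_of_isPushout_boundaryMap hiso hP₁) hpp₂ hpe₂
    ((range_pp_of_isPushout_boundaryMap hiso hP₁).trans
      (range_pp_of_isPushout_boundaryMap hiso hP₂).symm)
    ((range_pe_of_isPushout_boundaryMap hiso hP₁).trans
      (range_pe_of_isPushout_boundaryMap hiso hP₂).symm)
  have := OHom.mono_of_injective_s12 h₂ hpp₂ hpe₂
  refine ⟨φ, ?_, hφ⟩
  have w₁ : boundaryMap G ≫ m = c₁ ≫ h₁ := OHom.ext hP₁.w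
  have w₂ : boundaryMap G ≫ m = c₂ ≫ h₂ := OHom.ext hP₂.w
  apply (cancel_mono h₂).mp
  rw [Category.assoc, hφ, ← w₁, w₂]

/-- For a monomorphism `m : G ⟶ M` of open-graphs where `G` has no isolated points,
the subtraction `M − G` yields an `S`-adhesive pushout complement of the boundary map
`b : B ⟶ G` and `m`: there exist `H`, a coboundary `c : B ⟶ H` and an embedding
`h : H ⟶ M` with the square `(b, c, m, h)` an `S`-adhesive pushout (a plugging of `G`
and `H` along `(b, c)` recovering `M`), and `H` is unique up to isomorphism with this
property. -/
theorem subtraction_sAdhesive_pushoutComplement {G M : OGraph} (m : G ⟶ M) (hm : Mono m)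
    (hiso : ∀ p, ¬ IsIsolated G p) :
    ∃ (H : OGraph) (c : boundaryGraph G ⟶ H) (h : H ⟶ M),
      IsPushout (boundaryMap G) c m h ∧
      IsPushout (S.map (boundaryMap G)) (S.map c) (S.map m) (S.map h) ∧
      ∀ (H' : OGraph) (c' : boundaryGraph G ⟶ H') (h' : H' ⟶ M),
        IsPushout (boundaryMap G) c' m h' →
        IsPushout (S.map (boundaryMap G)) (S.map c') (S.map m) (S.map h') →
        ∃ φ : H ≅ H', c ≫ φ.hom = c' ∧ φ.hom ≫ h' = h := by
  have hS := isPushout_S_subtraction m hiso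
  exact ⟨subtraction m, coboundary m, subtractionIncl m,
    isPushout_of_isPushout_S hS (mem_range_or_mem_range_subtractionIncl m), hS,
    fun _ _ _ _ hS' => pushoutComplement_unique hiso hS hS'⟩
end

section
/- S-adhesive pushout complements commute with S-adhesive pushouts: given a mono b : B → K with S-adhesive pushout complement (c : B → G−K, s : G−K → G) for m : K → G, and a graph P with maps p : P → G, p' : P → G−K satisfying s ∘ p' = p, and q : P → H, such that (p,q) and (p',q) are both S-adhesive spans, then (G +_{p,q} H) −_{i∘m} K ≅ (G −_m K) +_{p',q} H, where i : G → G +_{p,q} H is the pushout injection, and the isomorphism commutes with the respective coboundary maps from B. -/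
open CategoryTheory Limits

/-- `S`-adhesive pushout complements commute with `S`-adhesive pushouts: given a mono
`b : B ⟶ K` with `S`-adhesive pushout complement `(c : B ⟶ GK, s : GK ⟶ G)` for
`m : K ⟶ G`, maps `p : P ⟶ G`, `p' : P ⟶ GK` with `p' ≫ s = p`, and `q : P ⟶ H`
such that `(p, q)` and `(p', q)` are both `S`-adhesive spans (with given pushouts
`GH = G +_{p,q} H`, `GKH = GK +_{p',q} H`), then `GKH` is an `S`-adhesive pushout
complement of `(b, m ≫ i)` with coboundary `c ≫ i'` — i.e.
`(G +_{p,q} H) −_{i∘m} K ≅ (G −_m K) +_{p',q} H`, compatibly with the coboundaries. -/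
theorem sAdhesive_complement_commutes_with_pushout
    {C A : Type*} [Category C] [Category A] [Adhesive A]
    {S : C ⥤ A} (hS : SelectiveAdhesive S)
    {B K G GK P H GH GKH : C}
    (b : B ⟶ K) (hb : Mono b) (m : K ⟶ G)
    (c : B ⟶ GK) (s : GK ⟶ G)
    (hcomp : IsPushout b c m s)
    (hcompS : IsPushout (S.map b) (S.map c) (S.map m) (S.map s))
    (p : P ⟶ G) (p' : P ⟶ GK) (q : P ⟶ H) (hp : p' ≫ s = p)
    (i : G ⟶ GH) (j : H ⟶ GH)
    (hpo1 : IsPushout p q i j)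
    (hpo1S : IsPushout (S.map p) (S.map q) (S.map i) (S.map j))
    (i' : GK ⟶ GKH) (j' : H ⟶ GKH)
    (hpo2 : IsPushout p' q i' j')
    (hpo2S : IsPushout (S.map p') (S.map q) (S.map i') (S.map j')) :
    ∃ g : GKH ⟶ GH,
      IsPushout b (c ≫ i') (m ≫ i) g ∧
      IsPushout (S.map b) (S.map (c ≫ i')) (S.map (m ≫ i)) (S.map g) := by
  have hw : p' ≫ (s ≫ i) = q ≫ j := by rw [← Category.assoc, hp, hpo1.w]
  refine ⟨hpo2.desc (s ≫ i) j hw, ?_, ?_⟩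
  · have h1 : i' ≫ hpo2.desc (s ≫ i) j hw = s ≫ i := hpo2.inl_desc _ _ _
    have h2 : j' ≫ hpo2.desc (s ≫ i) j hw = j := hpo2.inr_desc _ _ _
    have houter : IsPushout (p' ≫ s) q i (j' ≫ hpo2.desc (s ≫ i) j hw) := by
      rw [hp, h2]; exact hpo1
    have hright : IsPushout s i' i (hpo2.desc (s ≫ i) j hw) :=
      IsPushout.of_left houter h1.symm hpo2
    exact hcomp.paste_vert hright
  · have h1 : S.map i' ≫ S.map (hpo2.desc (s ≫ i) j hw) = S.map s ≫ S.map i := by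
      rw [← S.map_comp, ← S.map_comp, hpo2.inl_desc]
    have houter : IsPushout (S.map p' ≫ S.map s) (S.map q) (S.map i)
        (S.map j' ≫ S.map (hpo2.desc (s ≫ i) j hw)) := by
      rw [← S.map_comp, ← S.map_comp, hp, hpo2.inr_desc]; exact hpo1S
    have hright : IsPushout (S.map s) (S.map i') (S.map i)
        (S.map (hpo2.desc (s ≫ i) j hw)) :=
      IsPushout.of_left houter h1.symm hpo2S
    simpa only [S.map_comp] using hcompS.paste_vert hright
end

section
/- S-adhesive rewrites commute with S-adhesive pushouts: let L ←b₁− B −b₂→ R be a rewrite rule of monos, m : L → G an S-matching with double-pushout rewrite result G[L↦R]_m, and let (p, q), (p', q), (p̂, q) be three S-adhesive spans from P into (G, H), (G −_{b₁,m} L, H), and (G[L↦R]_m, H) respectively, compatible in the sense that s ∘ p' = p and s' ∘ p' = p̂ for the pushout-complement inclusions s, s'. If the composite i ∘ m of m with the pushout injection i : G → G +_{p,q} H is mono, then (G[L↦R]_m) +_{p̂,q} H ≅ (G +_{p,q} H)[L↦R]_{i∘m}. -/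
open CategoryTheory Limits

/-- Cancellation: if `(p', q, i', j')` is a pushout, `(p' ≫ s, q, i, j)` is a pushout,
and `t` is compatible, then `(s, i', i, t)` is a pushout. -/
lemma isPushout_cancel {D : Type*} [Category D] {P X Y Z W V : D}
    {p' : P ⟶ X} {q : P ⟶ Y} {i' : X ⟶ Z} {j' : Y ⟶ Z}
    (h2 : IsPushout p' q i' j')
    {s : X ⟶ W} {i : W ⟶ V} {j : Y ⟶ V}
    (h1 : IsPushout (p' ≫ s) q i j) {t : Z ⟶ V}
    (ht1 : i' ≫ t = s ≫ i) (ht2 : j' ≫ t = j) :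
    IsPushout s i' i t := by
  apply IsPushout.of_left _ ht1.symm h2
  rwa [ht2]

/-- `S`-adhesive rewrites commute with `S`-adhesive pushouts.  Given a rewrite rule of
monos `L ←b₁− B −b₂→ R`, an `S`-matching `m : L ⟶ G` with `S`-adhesive pushout
complement `(c, s)` (so `Gm = G −_{b₁,m} L`), `S`-adhesive rewrite result `Gr =
G[L↦R]_m` (pushout of `(c, b₂)`), three compatible `S`-adhesive spans `(p, q)`,
`(p', q)`, `(p̂, q)` from `P` into `(G, H)`, `(Gm, H)` and `(Gr, H)` with
`p' ≫ s = p` and `p' ≫ s' = p̂` and given pushouts `GH`, `GmH`, `GrH`, if `m ≫ i` is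
a monomorphism then `GrH = (G[L↦R]_m) +_{p̂,q} H` is the rewrite
`(G +_{p,q} H)[L↦R]_{i∘m}`: there is a double pushout from `m ≫ i` through a
complement `W` landing in `GrH`, all preserved by `S`. -/
theorem sAdhesive_rewrite_commutes_with_pushout
    {C A : Type*} [Category C] [Category A] [Adhesive A]
    {S : C ⥤ A} (hS : SelectiveAdhesive S)
    {B L R G Gm Gr P H GH GmH GrH : C}
    (b₁ : B ⟶ L) (b₂ : B ⟶ R) (hb₁ : Mono b₁) (hb₂ : Mono b₂)
    (m : L ⟶ G) (hm : Mono m)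
    (c : B ⟶ Gm) (s : Gm ⟶ G)
    (hpoc : IsPushout b₁ c m s)
    (hpocS : IsPushout (S.map b₁) (S.map c) (S.map m) (S.map s))
    (m' : R ⟶ Gr) (s' : Gm ⟶ Gr)
    (hpor : IsPushout b₂ c m' s')
    (hporS : IsPushout (S.map b₂) (S.map c) (S.map m') (S.map s'))
    (p : P ⟶ G) (p' : P ⟶ Gm) (phat : P ⟶ Gr) (q : P ⟶ H)
    (hp : p' ≫ s = p) (hphat : p' ≫ s' = phat)
    (i : G ⟶ GH) (j : H ⟶ GH)
    (hpo1 : IsPushout p q i j)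
    (hpo1S : IsPushout (S.map p) (S.map q) (S.map i) (S.map j))
    (i' : Gm ⟶ GmH) (j' : H ⟶ GmH)
    (hpo2 : IsPushout p' q i' j')
    (hpo2S : IsPushout (S.map p') (S.map q) (S.map i') (S.map j'))
    (ihat : Gr ⟶ GrH) (jhat : H ⟶ GrH)
    (hpo3 : IsPushout phat q ihat jhat)
    (hpo3S : IsPushout (S.map phat) (S.map q) (S.map ihat) (S.map jhat))
    (him : Mono (m ≫ i)) :
    ∃ (W : C) (cW : B ⟶ W) (sW : W ⟶ GH) (m'' : R ⟶ GrH) (s'W : W ⟶ GrH),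
      IsPushout b₁ cW (m ≫ i) sW ∧
      IsPushout (S.map b₁) (S.map cW) (S.map (m ≫ i)) (S.map sW) ∧
      IsPushout b₂ cW m'' s'W ∧
      IsPushout (S.map b₂) (S.map cW) (S.map m'') (S.map s'W) := by
  -- the mediating maps out of GmH
  have hwt : (p' ≫ s) ≫ i = q ≫ j := by rw [hp, hpo1.w]
  have hwt' : (p' ≫ s') ≫ ihat = q ≫ jhat := by rw [hphat, hpo3.w]
  set t : GmH ⟶ GH := hpo2.desc (s ≫ i) j (by simpa using hwt) with ht_def
  set t' : GmH ⟶ GrH := hpo2.desc (s' ≫ ihat) jhat (by simpa using hwt') with ht'_def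
  have ht1 : i' ≫ t = s ≫ i := hpo2.inl_desc _ _ _
  have ht2 : j' ≫ t = j := hpo2.inr_desc _ _ _
  have ht1' : i' ≫ t' = s' ≫ ihat := hpo2.inl_desc _ _ _
  have ht2' : j' ≫ t' = jhat := hpo2.inr_desc _ _ _
  -- cancellation in C
  have hc1 : IsPushout s i' i t := by
    apply isPushout_cancel hpo2 _ ht1 ht2
    rwa [hp]
  have hc1' : IsPushout s' i' ihat t' := by
    apply isPushout_cancel hpo2 _ ht1' ht2'
    rwa [hphat]
  -- cancellation in A
  have hc1S : IsPushout (S.map s) (S.map i') (S.map i) (S.map t) := by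
    apply isPushout_cancel hpo2S (p' := S.map p')
    · rw [← S.map_comp, hp]; exact hpo1S
    · rw [← S.map_comp, ht1, S.map_comp]
    · rw [← S.map_comp, ht2]
  have hc1S' : IsPushout (S.map s') (S.map i') (S.map ihat) (S.map t') := by
    apply isPushout_cancel hpo2S (p' := S.map p')
    · rw [← S.map_comp, hphat]; exact hpo3S
    · rw [← S.map_comp, ht1', S.map_comp]
    · rw [← S.map_comp, ht2']
  refine ⟨GmH, c ≫ i', t, m' ≫ ihat, t', ?_, ?_, ?_, ?_⟩
  · exact hpoc.paste_vert hc1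
  · have := hpocS.paste_vert hc1S
    simpa only [S.map_comp] using this
  · exact hpor.paste_vert hc1'
  · have := hporS.paste_vert hc1S'
    simpa only [S.map_comp] using this
end
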